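/- arXiv:2303.03605 — 6 statements merged into one kernel-verified Lean document; each statement's English description precedes it below -/
import Mathlib

section
/- Let f(x) = a_n x^n + a_{n-1} x^{n-1} + ... + a_1 x + p^u be a polynomial with integer coefficients, where p is a prime number and u ≥ 1. If p does not divide a_1 and p^u > |a_n| + |a_{n-1}| + ... + |a_1|, then f(x) is irreducible over ℚ. -/
open Polynomial Finset

private lemma aux_one_le_prod (s : Multiset ℝ) (h : ∀ x ∈ s, 1 ≤ x) : 1 ≤ s.prod := by
  induction s using Multiset.induction_on with
  | empty => simp
  | cons a t ih =>
    rw [Multiset.prod_cons]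
    have ha : 1 ≤ a := h a (Multiset.mem_cons_self a t)
    have ht : 1 ≤ t.prod := ih fun x hx => h x (Multiset.mem_cons_of_mem hx)
    nlinarith

private lemma aux_prod_gt_one {s : Multiset ℝ} (hs : s ≠ 0) (h : ∀ x ∈ s, 1 < x) :
    1 < s.prod := by
  obtain ⟨a, ha⟩ := Multiset.exists_mem_of_ne_zero hs
  obtain ⟨t, rfl⟩ := Multiset.exists_cons_of_mem ha
  rw [Multiset.prod_cons]
  have ha1 : 1 < a := h a (Multiset.mem_cons_self a t)
  have ht : 1 ≤ t.prod := aux_one_le_prod t fun x hx => (h x (Multiset.mem_cons_of_mem hx)).le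
  nlinarith

private lemma aux_abs_coeff_zero (g : ℤ[X]) (hg0 : g ≠ 0) (hdeg : 0 < g.natDegree)
    (hroots : ∀ z : ℂ, (g.map (Int.castRingHom ℂ)).IsRoot z → 1 < ‖z‖) :
    1 < |g.coeff 0| := by
  set G := g.map (Int.castRingHom ℂ) with hG
  have hinj : Function.Injective (Int.castRingHom ℂ) := Int.cast_injective
  have hGne : G ≠ 0 := by
    simpa [hG, Polynomial.map_eq_zero_iff hinj] using hg0
  have hdG : G.natDegree = g.natDegree := natDegree_map_eq_of_injective hinj g
  have hsplit : Splits G := IsAlgClosed.splits G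
  have hcard : Multiset.card G.roots = G.natDegree := splits_iff_card_roots.mp hsplit
  have heq := hsplit.eq_prod_roots
  have heval : G.eval 0 = G.leadingCoeff * (Multiset.map (fun z : ℂ => -z) G.roots).prod := by
    conv_lhs => rw [heq]
    simp [eval_multiset_prod, Multiset.map_map, Function.comp]
  have hprod : 1 < ((Multiset.map (fun z : ℂ => -z) G.roots).map (fun x : ℂ => ‖x‖)).prod := by
    apply aux_prod_gt_one
    · simp only [ne_eq, Multiset.map_eq_zero]
      intro hz
      rw [← Multiset.card_eq_zero] at hz
      omega
    · intro x hx
      simp only [Multiset.mem_map] at hx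
      obtain ⟨z, hz, rfl⟩ := hx
      obtain ⟨w, hw, rfl⟩ := hz
      show 1 < ‖-w‖
      rw [norm_neg]
      exact hroots w ((mem_roots hGne).mp hw)
  have hlc : 1 ≤ ‖G.leadingCoeff‖ := by
    have h2 : G.leadingCoeff = ((g.leadingCoeff : ℤ) : ℂ) := by
      rw [hG, Polynomial.leadingCoeff_map_of_injective hinj]
      rfl
    rw [h2, Complex.norm_intCast]
    have : g.leadingCoeff ≠ 0 := leadingCoeff_ne_zero.mpr hg0
    exact_mod_cast Int.one_le_abs this
  have habs : 1 < ‖G.eval 0‖ := by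
    have e : ‖(Multiset.map (fun z : ℂ => -z) G.roots).prod‖ =
        ((Multiset.map (fun z : ℂ => -z) G.roots).map (fun x : ℂ => ‖x‖)).prod :=
      map_multiset_prod (normHom (α := ℂ)) _
    rw [heval, norm_mul, e]
    nlinarith
  have hev : G.eval 0 = ((g.coeff 0 : ℤ) : ℂ) := by
    rw [← coeff_zero_eq_eval_zero, hG, coeff_map]
    rfl
  rw [hev, Complex.norm_intCast] at habs
  exact_mod_cast habs

private lemma aux_root_big (p n u : ℕ) (a : ℕ → ℤ)
    (hsum : (p : ℤ) ^ u > ∑ i ∈ Finset.Icc 1 n, |a i|) (z : ℂ)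
    (hz : ((∑ i ∈ Finset.Icc 1 n, C (a i) * X ^ i + C ((p : ℤ) ^ u)).map
      (Int.castRingHom ℂ)).IsRoot z) : 1 < ‖z‖ := by
  by_contra hle
  push_neg at hle
  have he : (∑ i ∈ Finset.Icc 1 n, (a i : ℂ) * z ^ i) + (p : ℂ) ^ u = 0 := by
    have := hz
    simp only [IsRoot, Polynomial.map_add, Polynomial.map_sum, Polynomial.map_mul,
      Polynomial.map_pow, map_C, map_X, eval_add, eval_finset_sum, eval_mul, eval_pow,
      eval_C, eval_X, eq_intCast, Polynomial.map_intCast, Polynomial.eval_intCast] at this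
    convert this using 2
    push_cast
    ring
  have hpe : (p : ℂ) ^ u = -(∑ i ∈ Finset.Icc 1 n, (a i : ℂ) * z ^ i) := by linear_combination he
  have habs : ((p : ℝ)) ^ u ≤ ∑ i ∈ Finset.Icc 1 n, (|a i| : ℝ) := by
    have h1 : ‖(p : ℂ) ^ u‖ = (p : ℝ) ^ u := by
      rw [norm_pow, Complex.norm_natCast]
    rw [← h1, hpe, norm_neg]
    calc ‖∑ i ∈ Finset.Icc 1 n, (a i : ℂ) * z ^ i‖
        ≤ ∑ i ∈ Finset.Icc 1 n, ‖(a i : ℂ) * z ^ i‖ :=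
          norm_sum_le _ _
      _ ≤ ∑ i ∈ Finset.Icc 1 n, (|a i| : ℝ) := by
          apply Finset.sum_le_sum
          intro i hi
          rw [norm_mul, norm_pow, Complex.norm_intCast]
          have h2 : ‖z‖ ^ i ≤ 1 :=
            pow_le_one₀ (norm_nonneg z) hle
          have h3 : (0:ℝ) ≤ |(a i : ℝ)| := abs_nonneg _
          nlinarith
  have hlt : (∑ i ∈ Finset.Icc 1 n, (|a i| : ℝ)) < (p : ℝ) ^ u := by
    exact_mod_cast hsum
  linarith

theorem stmt_5 (p n u : ℕ) (a : ℕ → ℤ) (hp : p.Prime) (hu : 1 ≤ u) (hn : 1 ≤ n)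
    (hpa1 : ¬ (p : ℤ) ∣ a 1)
    (hsum : (p : ℤ) ^ u > ∑ i ∈ Finset.Icc 1 n, |a i|) :
    Irreducible ((∑ i ∈ Finset.Icc 1 n, C (a i) * X ^ i + C ((p : ℤ) ^ u)).map
      (Int.castRingHom ℚ)) := by
  set f : ℤ[X] := ∑ i ∈ Finset.Icc 1 n, C (a i) * X ^ i + C ((p : ℤ) ^ u) with hf
  have hc0 : f.coeff 0 = (p : ℤ) ^ u := by
    rw [hf, coeff_add, finset_sum_coeff, coeff_C]
    simp only [coeff_C_mul, coeff_X_pow]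
    rw [Finset.sum_eq_zero, zero_add]
    · simp
    · intro i hi
      have : i ≠ 0 := by
        have := (Finset.mem_Icc.mp hi).1; omega
      have h0 : ¬ (0 = i) := by omega
      simp [this, h0]
  have hc1 : f.coeff 1 = a 1 := by
    rw [hf, coeff_add, finset_sum_coeff, coeff_C]
    simp only [coeff_C_mul, coeff_X_pow]
    rw [Finset.sum_eq_single 1]
    · simp
    · intro i hi hne
      simp [Ne.symm hne, (fun h => hne h.symm : ¬ (1 = i))]
    · intro h1
      exact absurd (Finset.mem_Icc.mpr ⟨le_refl 1, hn⟩) h1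
  have hpu : (p : ℤ) ^ u ≠ 0 := pow_ne_zero _ (by exact_mod_cast hp.ne_zero)
  have hfne : f ≠ 0 := fun h => hpu (by rw [← hc0, h, coeff_zero])
  have hprim : f.IsPrimitive := by
    intro r hr
    rw [C_dvd_iff_dvd_coeff] at hr
    have h0 : r ∣ (p : ℤ) ^ u := hc0 ▸ hr 0
    have h1 : r ∣ a 1 := hc1 ▸ hr 1
    have hna : r.natAbs ∣ p ^ u := by
      have h2 := Int.natAbs_dvd_natAbs.mpr h0
      rwa [Int.natAbs_pow, Int.natAbs_natCast] at h2
    obtain ⟨k, hk, hke⟩ := (Nat.dvd_prime_pow hp).mp hna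
    rcases Nat.eq_zero_or_pos k with hk0 | hk0
    · rw [hk0, pow_zero] at hke
      exact Int.isUnit_iff_natAbs_eq.mpr hke
    · exfalso
      apply hpa1
      have hpn : p ∣ r.natAbs := hke ▸ dvd_pow_self p hk0.ne'
      exact ((Int.natCast_dvd_natCast.mpr hpn).trans (Int.natAbs_dvd.mpr dvd_rfl)).trans h1
  rw [← Polynomial.IsPrimitive.Int.irreducible_iff_irreducible_map_cast hprim]
  constructor
  · intro hU
    obtain ⟨r, _, hr⟩ := Polynomial.isUnit_iff.mp hU
    apply hpa1
    rw [← hc1, ← hr, coeff_C]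
    simp
  · intro g h hgh
    by_contra hcon
    push_neg at hcon
    obtain ⟨hgu, hhu⟩ := hcon
    have hgne : g ≠ 0 := fun e => hfne (by rw [hgh, e, zero_mul])
    have hhne : h ≠ 0 := fun e => hfne (by rw [hgh, e, mul_zero])
    have hdg : 0 < g.natDegree := by
      rcases Nat.eq_zero_or_pos g.natDegree with hd | hd
      · exfalso
        apply hgu
        have hgC : g = C (g.coeff 0) := eq_C_of_natDegree_eq_zero hd
        have : C (g.coeff 0) ∣ f := by rw [← hgC, hgh]; exact Dvd.intro h rfl
        have := hprim _ this
        rw [hgC]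
        exact this.map C
      · exact hd
    have hdh : 0 < h.natDegree := by
      rcases Nat.eq_zero_or_pos h.natDegree with hd | hd
      · exfalso
        apply hhu
        have hhC : h = C (h.coeff 0) := eq_C_of_natDegree_eq_zero hd
        have : C (h.coeff 0) ∣ f := by rw [← hhC, hgh]; exact Dvd.intro_left g rfl
        have := hprim _ this
        rw [hhC]
        exact this.map C
      · exact hd
    have hroots : ∀ z : ℂ, (f.map (Int.castRingHom ℂ)).IsRoot z → 1 < ‖z‖ :=
      fun z hz => aux_root_big p n u a hsum z hz
    have htrans : ∀ q : ℤ[X], q ∣ f →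
        ∀ z : ℂ, (q.map (Int.castRingHom ℂ)).IsRoot z → 1 < ‖z‖ := by
      intro q hq z hz
      apply hroots z
      obtain ⟨r, hr⟩ := hq
      rw [IsRoot, hr, Polynomial.map_mul, eval_mul, hz, zero_mul]
    have hg1 : 1 < |g.coeff 0| :=
      aux_abs_coeff_zero g hgne hdg (htrans g ⟨h, hgh⟩)
    have hh1 : 1 < |h.coeff 0| :=
      aux_abs_coeff_zero h hhne hdh (htrans h ⟨g, by rw [hgh, mul_comm]⟩)
    have e0 : g.coeff 0 * h.coeff 0 = (p : ℤ) ^ u := by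
      rw [← hc0, hgh, mul_coeff_zero]
    have e1 : g.coeff 0 * h.coeff 1 + g.coeff 1 * h.coeff 0 = a 1 := by
      rw [← hc1, hgh, coeff_mul, Finset.Nat.sum_antidiagonal_eq_sum_range_succ_mk]
      simp [Finset.sum_range_succ]
    have key : ∀ c : ℤ, 1 < |c| → c ∣ (p : ℤ) ^ u → (p : ℤ) ∣ c := by
      intro c hc hcd
      have hna : c.natAbs ∣ p ^ u := by
        have h2 := Int.natAbs_dvd_natAbs.mpr hcd
        rwa [Int.natAbs_pow, Int.natAbs_natCast] at h2
      obtain ⟨k, hk, hke⟩ := (Nat.dvd_prime_pow hp).mp hna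
      have hk0 : 0 < k := by
        rcases Nat.eq_zero_or_pos k with h0 | h0
        · exfalso
          rw [h0, pow_zero] at hke
          have : |c| = 1 := by rw [Int.abs_eq_natAbs, hke]; rfl
          omega
        · exact h0
      have hpn : p ∣ c.natAbs := hke ▸ dvd_pow_self p hk0.ne'
      exact (Int.natCast_dvd_natCast.mpr hpn).trans (Int.natAbs_dvd.mpr dvd_rfl)
    have hpg : (p : ℤ) ∣ g.coeff 0 := key _ hg1 ⟨h.coeff 0, e0.symm⟩
    have hph : (p : ℤ) ∣ h.coeff 0 := key _ hh1 ⟨g.coeff 0, by rw [← e0]; ring⟩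
    exact hpa1 (e1 ▸ dvd_add (Dvd.dvd.mul_right hpg _) (Dvd.dvd.mul_left hph _))
end

section
/- Let f(x) = a_n x^n + a_{n-1} x^{n-1} + ... + a_3 x^3 + p^u be a polynomial of degree n with integer coefficients, where p is a prime number, u ≥ 1, and the coefficients of x^1 and x^2 are zero. If p does not divide a_n · a_3, 3 does not divide u, and p^u > |a_n| + |a_{n-1}| + ... + |a_3|, then f(x) is irreducible over ℚ. -/
open Polynomial Finset

lemma coeff_f (n : ℕ) (c : ℤ) (a : ℕ → ℤ) (m : ℕ) :
    (∑ i ∈ Finset.Icc 3 n, C (a i) * X ^ i + C c).coeff m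
      = (if m ∈ Finset.Icc 3 n then a m else 0) + (if m = 0 then c else 0) := by
  rw [coeff_add, finset_sum_coeff, coeff_C]
  congr 1
  simp only [coeff_C_mul, coeff_X_pow, mul_ite, mul_one, mul_zero]
  rw [Finset.sum_ite_eq]

lemma root_big (p n u : ℕ) (a : ℕ → ℤ) (hp : 0 < p)
    (hsum : (p:ℤ)^u > ∑ i ∈ Finset.Icc 3 n, |a i|) (z : ℂ)
    (hz : ((∑ i ∈ Finset.Icc 3 n, C (a i) * X ^ i + C ((p:ℤ)^u)).map
      (Int.castRingHom ℂ)).eval z = 0) : 1 < ‖z‖ := by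
  by_contra hle
  push_neg at hle
  have hev : (∑ i ∈ Finset.Icc 3 n, (a i : ℂ) * z ^ i) + (p:ℂ)^u = 0 := by
    rw [eval_map] at hz
    simp only [eval₂_add, eval₂_finset_sum, eval₂_mul, eval₂_C, eval₂_X_pow] at hz
    simp only [eq_intCast] at hz
    push_cast at hz
    exact hz
  have habs : ((p:ℝ))^u = ‖∑ i ∈ Finset.Icc 3 n, (a i : ℂ) * z ^ i‖ := by
    have : (∑ i ∈ Finset.Icc 3 n, (a i : ℂ) * z ^ i) = -((p:ℂ)^u) := by linear_combination hev
    rw [this, norm_neg, norm_pow, Complex.norm_natCast]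
  have hb : ‖∑ i ∈ Finset.Icc 3 n, (a i : ℂ) * z ^ i‖
      ≤ ∑ i ∈ Finset.Icc 3 n, |((a i : ℤ) : ℝ)| := by
    refine (norm_sum_le _ _).trans (Finset.sum_le_sum fun i _ => ?_)
    rw [norm_mul, norm_pow, Complex.norm_intCast]
    calc |(a i : ℝ)| * ‖z‖ ^ i ≤ |(a i : ℝ)| * 1 := by
          refine mul_le_mul_of_nonneg_left ?_ (abs_nonneg _)
          exact pow_le_one₀ (norm_nonneg z) hle
      _ = |(a i : ℝ)| := mul_one _
  have hcast : (∑ i ∈ Finset.Icc 3 n, |((a i : ℤ) : ℝ)|) < (p:ℝ)^u := by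
    calc (∑ i ∈ Finset.Icc 3 n, |((a i : ℤ) : ℝ)|)
        = ((∑ i ∈ Finset.Icc 3 n, |a i| : ℤ) : ℝ) := by push_cast [Int.cast_abs]; ring
      _ < (((p:ℤ)^u : ℤ) : ℝ) := by exact_mod_cast hsum
      _ = (p:ℝ)^u := by push_cast; ring
  rw [habs] at hcast
  exact absurd hcast (not_lt.mpr hb)

lemma factor_const_big (p n u : ℕ) (a : ℕ → ℤ) (hp : 0 < p)
    (hsum : (p:ℤ)^u > ∑ i ∈ Finset.Icc 3 n, |a i|)
    (g : ℤ[X]) (hdvd : g ∣ (∑ i ∈ Finset.Icc 3 n, C (a i) * X ^ i + C ((p:ℤ)^u)))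
    (hdeg : 1 ≤ g.natDegree) : 1 < (g.coeff 0).natAbs := by
  have hginj : Function.Injective (Int.castRingHom ℂ) := Int.cast_injective
  have hgne : g ≠ 0 := by rintro rfl; simp at hdeg
  set G := g.map (Int.castRingHom ℂ) with hG
  have hGne : G ≠ 0 := (Polynomial.map_ne_zero_iff hginj).mpr hgne
  have hsplit : Splits G := IsAlgClosed.splits G
  have hcard : Multiset.card G.roots = G.natDegree := (splits_iff_card_roots).mp hsplit
  have hGdeg : G.natDegree = g.natDegree := natDegree_map_eq_of_injective hginj g
  have hroots : ∀ r ∈ G.roots, 1 < ‖r‖ := by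
    intro r hr
    obtain ⟨q, hq⟩ := hdvd
    apply root_big p n u a hp hsum
    rw [hq, Polynomial.map_mul, eval_mul,
      show eval r (Polynomial.map (Int.castRingHom ℂ) g) = 0 from (mem_roots'.mp hr).2, zero_mul]
  -- evaluate at 0
  have heq := hsplit.eq_prod_roots
  have hev0 : ‖G.eval 0‖
      = ‖G.leadingCoeff‖ * (G.roots.map (fun r => ‖r‖)).prod := by
    conv_lhs => rw [heq]
    rw [eval_mul, eval_C, norm_mul, eval_multiset_prod, Multiset.map_map]
    congr 1
    rw [show ∀ s : Multiset ℂ, ‖s.prod‖ = (s.map (‖·‖)).prod from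
      fun s => map_multiset_prod (normHom : ℂ →*₀ ℝ) s, Multiset.map_map]
    congr 1
    ext r
    simp
  have hlc : 1 ≤ ‖G.leadingCoeff‖ := by
    have : G.leadingCoeff = ((g.leadingCoeff : ℤ) : ℂ) := by
      rw [hG, leadingCoeff, coeff_map, hGdeg]; rfl
    rw [this, Complex.norm_intCast]
    exact_mod_cast Int.one_le_abs (leadingCoeff_ne_zero.mpr hgne)
  have hprod : 1 < (G.roots.map (fun r => ‖r‖)).prod := by
    have hcard1 : 0 < Multiset.card G.roots := by rw [hcard, hGdeg]; omega
    obtain ⟨r, hr⟩ := Multiset.card_pos_iff_exists_mem.mp hcard1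
    rw [← Multiset.prod_map_erase (f := fun r => ‖r‖) hr]
    have h1 : (1:ℝ) ≤ ((G.roots.erase r).map (fun r => ‖r‖)).prod := by
      apply Multiset.one_le_prod
      intro x hx
      obtain ⟨y, hy, rfl⟩ := Multiset.mem_map.mp hx
      exact le_of_lt (hroots y (Multiset.mem_of_mem_erase hy))
    calc (1:ℝ) < ‖r‖ * 1 := by rw [mul_one]; exact hroots r hr
      _ ≤ ‖r‖ * _ := by
          refine mul_le_mul_of_nonneg_left h1 (norm_nonneg r)
  have hfin : (1:ℝ) < ‖G.eval 0‖ := by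
    rw [hev0]
    calc (1:ℝ) < (G.roots.map (fun r => ‖r‖)).prod := hprod
      _ = 1 * _ := (one_mul _).symm
      _ ≤ ‖G.leadingCoeff‖ * _ := by
          refine mul_le_mul_of_nonneg_right hlc (Multiset.prod_nonneg ?_)
          intro x hx
          obtain ⟨y, hy, rfl⟩ := Multiset.mem_map.mp hx
          exact norm_nonneg y
  have : G.eval 0 = ((g.coeff 0 : ℤ) : ℂ) := by
    rw [← coeff_zero_eq_eval_zero, hG, coeff_map]; rfl
  rw [this, Complex.norm_intCast, ← Int.cast_abs] at hfin
  have h2 : (1:ℤ) < |g.coeff 0| := by exact_mod_cast hfin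
  rw [Int.abs_eq_natAbs] at h2
  exact_mod_cast h2

lemma val_decomp (p : ℕ) (hp : p.Prime) (x : ℤ) (hx : x ≠ 0) :
    ∃ w m : ℕ, x.natAbs = p ^ w * m ∧ ¬ p ∣ m ∧ ((p:ℤ) ∣ x → 1 ≤ w) := by
  have hxn : x.natAbs ≠ 0 := Int.natAbs_ne_zero.mpr hx
  refine ⟨x.natAbs.factorization p, x.natAbs / p ^ x.natAbs.factorization p, ?_, ?_, ?_⟩
  · exact (Nat.ordProj_mul_ordCompl_eq_self _ p).symm
  · exact Nat.not_dvd_ordCompl hp hxn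
  · intro hdvd
    have h1 : p ∣ x.natAbs := Int.natCast_dvd.mp hdvd
    have := (Nat.Prime.dvd_iff_one_le_factorization hp hxn).mp h1
    omega

lemma int_pow_dvd (p k : ℕ) (x : ℤ) (h : (p:ℤ) ^ k ∣ x) : p ^ k ∣ x.natAbs := by
  have : ((p ^ k : ℕ) : ℤ) ∣ x := by push_cast; exact h
  exact Int.natCast_dvd.mp this

lemma int_pow_dvd' (p k : ℕ) (x : ℤ) (h : p ^ k ∣ x.natAbs) : (p:ℤ) ^ k ∣ x := by
  have : ((p ^ k : ℕ) : ℤ) ∣ x := Int.natCast_dvd.mpr h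
  push_cast at this; exact this

lemma key_case (p : ℕ) (hp : p.Prime) (u s t : ℕ) (b0 b1 b2 c0 c1 c2 : ℤ)
    (hb0 : b0.natAbs = p ^ s) (hc0 : c0.natAbs = p ^ t)
    (hs : 1 ≤ s)
    (hb1 : ¬ (p:ℤ) ∣ b1) (hc1 : (p:ℤ) ∣ c1) (hc2 : ¬ (p:ℤ) ∣ c2)
    (e1 : b0 * c1 + b1 * c0 = 0) (e2 : b0 * c2 + b1 * c1 + b2 * c0 = 0)
    (hst : s + t = u) : 3 ∣ u := by
  have hppos : 0 < p := hp.pos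
  have hb0ne : b0 ≠ 0 := Int.natAbs_ne_zero.mp (by rw [hb0]; exact (pow_pos hppos s).ne')
  have hc0ne : c0 ≠ 0 := Int.natAbs_ne_zero.mp (by rw [hc0]; exact (pow_pos hppos t).ne')
  have hb1ne : b1 ≠ 0 := fun h => hb1 (h ▸ dvd_zero _)
  have hc1ne : c1 ≠ 0 := by
    intro h
    rw [h, mul_zero, zero_add] at e1
    exact (mul_ne_zero hb1ne hc0ne) e1
  obtain ⟨w, m, hm, hpm, hw1⟩ := val_decomp p hp c1 hc1ne
  have hw : 1 ≤ w := hw1 hc1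
  have hm0 : m ≠ 0 := by
    intro h; rw [h, mul_zero] at hm; exact Int.natAbs_ne_zero.mpr hc1ne hm
  have e1' : b1 * c0 = - (b0 * c1) := by linarith
  have e1n : b1.natAbs * p ^ t = p ^ s * (p ^ w * m) := by
    have := congrArg Int.natAbs e1'
    rwa [Int.natAbs_neg, Int.natAbs_mul, Int.natAbs_mul, hb0, hc0, hm] at this
  have hpb1n : ¬ p ∣ b1.natAbs := fun h => hb1 (Int.natCast_dvd.mpr h)
  have htsw : t = s + w := by
    have h1 : (b1.natAbs * p ^ t).factorization p = t := by
      rw [Nat.factorization_mul (by omega) (by positivity)]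
      simp [Nat.Prime.factorization_pow, hp, Nat.factorization_eq_zero_of_not_dvd hpb1n]
    have h2 : (p ^ s * (p ^ w * m)).factorization p = s + w := by
      rw [Nat.factorization_mul (by positivity) (by positivity),
        Nat.factorization_mul (by positivity) hm0]
      simp [hp, Nat.factorization_eq_zero_of_not_dvd hpm]
    rw [e1n, h2] at h1; omega
  -- now show s = w
  have hsw : s = w := by
    by_contra hne
    rcases Nat.lt_or_ge s w with hlt | hge
    · -- p^(s+1) ∣ c1 and ∣ c0, so p^(s+1) ∣ b0*c2, contradiction
      have d1 : (p:ℤ) ^ (s+1) ∣ c1 := int_pow_dvd' _ _ _ (hm ▸ Dvd.dvd.mul_right (pow_dvd_pow p (by omega)) m)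
      have d2 : (p:ℤ) ^ (s+1) ∣ c0 := int_pow_dvd' _ _ _ (hc0 ▸ pow_dvd_pow p (by omega))
      have d3 : (p:ℤ) ^ (s+1) ∣ b0 * c2 := by
        have : b0 * c2 = -(b1 * c1 + b2 * c0) := by linarith
        rw [this]
        exact dvd_neg.mpr (dvd_add (Dvd.dvd.mul_left d1 b1) (Dvd.dvd.mul_left d2 b2))
      have d4 : p ^ (s+1) ∣ p ^ s * c2.natAbs := by
        have := int_pow_dvd p (s+1) _ d3
        rwa [Int.natAbs_mul, hb0] at this
      have : p ∣ c2.natAbs := by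
        rw [pow_succ, mul_comm (p^s) c2.natAbs] at d4
        exact (mul_dvd_mul_iff_left (a := p ^ s) (by positivity)).mp
          (by rwa [mul_comm c2.natAbs (p^s)] at d4)
      exact hc2 (Int.natCast_dvd.mpr this)
    · have hgt : w < s := by omega
      have d1 : (p:ℤ) ^ (w+1) ∣ b0 := int_pow_dvd' _ _ _ (hb0 ▸ pow_dvd_pow p (by omega))
      have d2 : (p:ℤ) ^ (w+1) ∣ c0 := int_pow_dvd' _ _ _ (hc0 ▸ pow_dvd_pow p (by omega))
      have d3 : (p:ℤ) ^ (w+1) ∣ b1 * c1 := by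
        have : b1 * c1 = -(b0 * c2 + b2 * c0) := by linarith
        rw [this]
        exact dvd_neg.mpr (dvd_add (Dvd.dvd.mul_right d1 c2) (Dvd.dvd.mul_left d2 b2))
      have d4 : p ^ (w+1) ∣ p ^ w * (b1.natAbs * m) := by
        have := int_pow_dvd p (w+1) _ d3
        rw [Int.natAbs_mul, hm] at this
        rwa [show b1.natAbs * (p ^ w * m) = p ^ w * (b1.natAbs * m) by ring] at this
      have : p ∣ b1.natAbs * m := by
        rw [pow_succ, mul_comm (p^w) p] at d4
        exact (mul_dvd_mul_iff_left (a := p ^ w) (by positivity)).mp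
          (by rwa [mul_comm p (p^w), ← pow_succ] at d4; )
      rcases (Nat.Prime.dvd_mul hp).mp this with h | h
      · exact hpb1n h
      · exact hpm h
  exact ⟨s, by omega⟩

section helpers
theorem stmt_7 (p n u : ℕ) (a : ℕ → ℤ) (hp : p.Prime) (hu : 1 ≤ u) (hn : 3 ≤ n)
    (han : a n ≠ 0) (ha3 : a 3 ≠ 0)
    (hpa : ¬ (p : ℤ) ∣ a n * a 3) (h3u : ¬ 3 ∣ u)
    (hsum : (p : ℤ) ^ u > ∑ i ∈ Finset.Icc 3 n, |a i|) :
    Irreducible ((∑ i ∈ Finset.Icc 3 n, C (a i) * X ^ i + C ((p : ℤ) ^ u)).map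
      (Int.castRingHom ℚ)) := by
  have hpz : Prime (p:ℤ) := Nat.prime_iff_prime_int.mp hp
  set f : ℤ[X] := ∑ i ∈ Finset.Icc 3 n, C (a i) * X ^ i + C ((p:ℤ)^u) with hf
  have hpan : ¬ (p:ℤ) ∣ a n := fun h => hpa (h.mul_right _)
  have hpa3 : ¬ (p:ℤ) ∣ a 3 := fun h => hpa (h.mul_left _)
  have hc : ∀ m, f.coeff m
      = (if m ∈ Finset.Icc 3 n then a m else 0) + (if m = 0 then (p:ℤ)^u else 0) :=
    coeff_f n _ a
  have hc0 : f.coeff 0 = (p:ℤ)^u := by rw [hc]; simp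
  have hc1 : f.coeff 1 = 0 := by rw [hc]; simp
  have hc2 : f.coeff 2 = 0 := by rw [hc]; simp
  have hc3 : f.coeff 3 = a 3 := by rw [hc]; simp; omega
  have hcn : f.coeff n = a n := by rw [hc]; simp; omega
  have hfne : f ≠ 0 := fun h => han (by rw [← hcn, h, coeff_zero])
  have hdeg : f.natDegree = n := by
    refine le_antisymm (natDegree_le_iff_coeff_eq_zero.mpr fun m hm => ?_)
      (le_natDegree_of_ne_zero (hcn ▸ han))
    rw [hc]
    have h1 : m ∉ Finset.Icc 3 n := by simp; omega
    have h2 : m ≠ 0 := by omega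
    simp [h1, h2]
  have hlcf : f.leadingCoeff = a n := by rw [leadingCoeff, hdeg, hcn]
  -- primitivity
  have hprim : f.IsPrimitive := by
    intro r hr
    rw [C_dvd_iff_dvd_coeff] at hr
    by_contra hrnu
    obtain ⟨q, hq, hqr⟩ := Int.exists_prime_and_dvd
      (fun h => hrnu (Int.isUnit_iff_natAbs_eq.mpr h))
    have hq0 : q ∣ (p:ℤ)^u := hqr.trans (hc0 ▸ hr 0)
    have hqp : q ∣ (p:ℤ) := hq.dvd_of_dvd_pow hq0
    have : (p:ℤ) ∣ r := ((hq.associated_of_dvd hpz hqp).symm.dvd.trans hqr)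
    exact hpan (this.trans (hcn ▸ hr n))
  -- irreducibility over ℤ
  have hirr : Irreducible f := by
    constructor
    · intro hun
      have := natDegree_eq_zero_of_isUnit hun
      omega
    · intro g h hgh
      by_contra hcon
      push_neg at hcon
      obtain ⟨hgu, hhu⟩ := hcon
      have hdg : 1 ≤ g.natDegree := by
        by_contra hd
        push_neg at hd
        have hC : g = C (g.coeff 0) := eq_C_of_natDegree_eq_zero (by omega)
        have : IsUnit (g.coeff 0) := hprim _ (by rw [← hC]; exact ⟨h, hgh⟩)
        exact hgu (by rw [hC]; exact isUnit_C.mpr this)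
      have hdh : 1 ≤ h.natDegree := by
        by_contra hd
        push_neg at hd
        have hC : h = C (h.coeff 0) := eq_C_of_natDegree_eq_zero (by omega)
        have : IsUnit (h.coeff 0) := hprim _ (by rw [← hC]; exact ⟨g, by rw [hgh, mul_comm]⟩)
        exact hhu (by rw [hC]; exact isUnit_C.mpr this)
      have hgne : g ≠ 0 := fun e => by simp [e] at hdg
      have hhne : h ≠ 0 := fun e => by simp [e] at hdh
      have hlcgh : g.leadingCoeff * h.leadingCoeff = a n := by
        rw [← leadingCoeff_mul, ← hgh, hlcf]
      have hplcg : ¬ (p:ℤ) ∣ g.leadingCoeff := fun hd => hpan (hlcgh ▸ hd.mul_right _)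
      have hplch : ¬ (p:ℤ) ∣ h.leadingCoeff := fun hd => hpan (hlcgh ▸ hd.mul_left _)
      have hconst : g.coeff 0 * h.coeff 0 = (p:ℤ)^u := by
        rw [← mul_coeff_zero, ← hgh, hc0]
      have hna : (g.coeff 0).natAbs * (h.coeff 0).natAbs = p ^ u := by
        have := congrArg Int.natAbs hconst
        rwa [Int.natAbs_mul, Int.natAbs_pow, Int.natAbs_natCast] at this
      obtain ⟨s, hsu, hgs⟩ := (Nat.dvd_prime_pow hp).mp (Dvd.intro _ hna)
      set t := u - s with ht
      have hht : (h.coeff 0).natAbs = p ^ t := by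
        have h1 : p ^ s * (h.coeff 0).natAbs = p ^ s * p ^ t := by
          rw [← pow_add, show s + (u - s) = u by omega, ← hna, hgs]
        exact Nat.eq_of_mul_eq_mul_left (pow_pos hp.pos s) h1
      have hst : s + t = u := by omega
      -- both constant terms are > 1 in absolute value
      have hs1 : 1 ≤ s := by
        have := factor_const_big p n u a hp.pos hsum g ⟨h, by rw [← hf]; exact hgh⟩ hdg
        rw [hgs] at this
        by_contra hcs
        push_neg at hcs
        interval_cases s
        simp at this
      have ht1 : 1 ≤ t := by
        have := factor_const_big p n u a hp.pos hsum h ⟨g, by rw [← hf, hgh]; ring⟩ hdh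
        rw [hht] at this
        by_contra hcs
        push_neg at hcs
        interval_cases t
        simp at this
      -- least indices not divisible by p
      have hgex : ∃ k, ¬ (p:ℤ) ∣ g.coeff k := ⟨g.natDegree, hplcg⟩
      have hhex : ∃ k, ¬ (p:ℤ) ∣ h.coeff k := ⟨h.natDegree, hplch⟩
      set i := Nat.find hgex with hidef
      set j := Nat.find hhex with hjdef
      have hi : ¬ (p:ℤ) ∣ g.coeff i := Nat.find_spec hgex
      have hj : ¬ (p:ℤ) ∣ h.coeff j := Nat.find_spec hhex
      have himin : ∀ k < i, (p:ℤ) ∣ g.coeff k := fun k hk => of_not_not (Nat.find_min hgex hk)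
      have hjmin : ∀ k < j, (p:ℤ) ∣ h.coeff k := fun k hk => of_not_not (Nat.find_min hhex hk)
      have hpg0 : (p:ℤ) ∣ g.coeff 0 := by
        have := int_pow_dvd' p 1 (g.coeff 0) (by rw [hgs]; exact pow_dvd_pow p hs1)
        simpa using this
      have hph0 : (p:ℤ) ∣ h.coeff 0 := by
        have := int_pow_dvd' p 1 (h.coeff 0) (by rw [hht]; exact pow_dvd_pow p ht1)
        simpa using this
      -- the coefficient of x^(i+j) in f is not divisible by p
      have hij_nd : ¬ (p:ℤ) ∣ f.coeff (i + j) := by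
        rw [hgh, coeff_mul]
        have hmem : ((i, j) : ℕ × ℕ) ∈ Finset.HasAntidiagonal.antidiagonal (i + j) :=
          Finset.HasAntidiagonal.mem_antidiagonal.mpr rfl
        rw [← Finset.add_sum_erase _ _ hmem]
        intro hdvd
        have hrest : (p:ℤ) ∣ ∑ x ∈ (Finset.HasAntidiagonal.antidiagonal (i + j)).erase (i, j),
            g.coeff x.1 * h.coeff x.2 := by
          refine Finset.dvd_sum fun x hx => ?_
          obtain ⟨hxne, hxmem⟩ := Finset.mem_erase.mp hx
          have hxsum : x.1 + x.2 = i + j := Finset.HasAntidiagonal.mem_antidiagonal.mp hxmem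
          rcases Nat.lt_or_ge x.1 i with hlt | hge
          · exact (himin x.1 hlt).mul_right _
          · have : x.2 < j := by
              rcases Nat.lt_or_ge x.2 j with h' | h'
              · exact h'
              · exfalso; apply hxne
                have : x.1 = i ∧ x.2 = j := by omega
                exact Prod.ext this.1 this.2
            exact ((hjmin x.2 this).mul_left _)
        have : (p:ℤ) ∣ g.coeff i * h.coeff j := by
          have := dvd_sub hdvd hrest
          simpa using this
        rcases Int.Prime.dvd_mul' hp this with h' | h'
        · exact hi h'
        · exact hj h'
      have hlow : ∀ m, m < i + j → (p:ℤ) ∣ f.coeff m := by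
        intro m hm
        rw [hgh, coeff_mul]
        refine Finset.dvd_sum fun x hx => ?_
        have hxsum : x.1 + x.2 = m := Finset.HasAntidiagonal.mem_antidiagonal.mp hx
        rcases Nat.lt_or_ge x.1 i with hlt | hge
        · exact (himin x.1 hlt).mul_right _
        · exact ((hjmin x.2 (by omega)).mul_left _)
      have hij3 : i + j = 3 := by
        rcases Nat.lt_or_ge (i + j) 3 with hlt | hge
        · exfalso
          apply hij_nd
          rcases (by omega : i + j = 0 ∨ i + j = 1 ∨ i + j = 2) with hij | hij | hij
          · rw [hij, hc0]; exact dvd_pow_self _ (by omega)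
          · rw [hij, hc1]; exact dvd_zero _
          · rw [hij, hc2]; exact dvd_zero _
        · rcases Nat.eq_or_lt_of_le hge with heq | hgt
          · omega
          · exact absurd (hc3 ▸ hlow 3 hgt) hpa3
      have hi1 : 1 ≤ i := by
        rcases Nat.eq_zero_or_pos i with h0 | h1
        · exact absurd (h0 ▸ hpg0) hi
        · exact h1
      have hj1 : 1 ≤ j := by
        rcases Nat.eq_zero_or_pos j with h0 | h1
        · exact absurd (h0 ▸ hph0) hj
        · exact h1
      -- the two coefficient equations
      have e1 : g.coeff 0 * h.coeff 1 + g.coeff 1 * h.coeff 0 = 0 := by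
        have h1 : (g * h).coeff 1 = 0 := by rw [← hgh]; exact hc1
        rw [coeff_mul, Finset.Nat.sum_antidiagonal_eq_sum_range_succ_mk] at h1
        simpa [Finset.sum_range_succ] using h1
      have e2 : g.coeff 0 * h.coeff 2 + g.coeff 1 * h.coeff 1 + g.coeff 2 * h.coeff 0 = 0 := by
        have h1 : (g * h).coeff 2 = 0 := by rw [← hgh]; exact hc2
        rw [coeff_mul, Finset.Nat.sum_antidiagonal_eq_sum_range_succ_mk] at h1
        simpa [Finset.sum_range_succ, add_assoc] using h1
      have h3u' : 3 ∣ u := by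
        rcases (by omega : i = 1 ∧ j = 2 ∨ i = 2 ∧ j = 1) with ⟨hi1', hj2'⟩ | ⟨hi2', hj1'⟩
        · exact key_case p hp u s t (g.coeff 0) (g.coeff 1) (g.coeff 2)
            (h.coeff 0) (h.coeff 1) (h.coeff 2) hgs hht hs1
            (hi1' ▸ hi) (hjmin 1 (by omega)) (hj2' ▸ hj) e1 e2 hst
        · refine key_case p hp u t s (h.coeff 0) (h.coeff 1) (h.coeff 2)
            (g.coeff 0) (g.coeff 1) (g.coeff 2) hht hgs ht1
            (hj1' ▸ hj) (himin 1 (by omega)) (hi2' ▸ hi) (by linarith) (by linarith)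
            (by omega)
      exact h3u h3u'
  exact (Polynomial.IsPrimitive.Int.irreducible_iff_irreducible_map_cast hprim).mp hirr
end helpers
end

section
/- Let p be a prime number, n ≥ 2 an integer, and u ≥ 1 an integer with p^u > 2. Then for each choice of signs ε, δ ∈ {+1, -1}, the polynomial x^n + ε·x + δ·p^u is irreducible over ℚ. -/
open Polynomial

private lemma weisner_root_abs (p n u : ℕ) (hn : 2 ≤ n)
    (hpu : (p : ℤ) ^ u > 2) (ε δ : ℤ) (hε : ε = 1 ∨ ε = -1) (hδ : δ = 1 ∨ δ = -1)
    (z : ℂ) (hz : ((X ^ n + C ε * X + C (δ * (p : ℤ) ^ u)).map (Int.castRingHom ℂ)).IsRoot z) :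
    1 < ‖z‖ := by
  by_contra hle
  push_neg at hle
  have hz' : z ^ n + (ε : ℂ) * z + ((δ : ℂ) * (p : ℂ) ^ u) = 0 := by
    simpa [IsRoot] using hz
  have habs : ‖z ^ n + (ε : ℂ) * z‖ = (p : ℝ) ^ u := by
    have h1 : z ^ n + (ε : ℂ) * z = -((δ : ℂ) * (p : ℂ) ^ u) := by linear_combination hz'
    rw [h1, norm_neg, norm_mul, norm_pow, Complex.norm_natCast]
    rcases hδ with h | h <;> simp [h]
  have hb : ‖z ^ n + (ε : ℂ) * z‖ ≤ 2 := by
    calc ‖z ^ n + (ε : ℂ) * z‖ ≤ ‖z ^ n‖ + ‖(ε : ℂ) * z‖ :=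
          norm_add_le _ _
      _ ≤ 1 + 1 := by
          apply add_le_add
          · rw [norm_pow]; exact pow_le_one₀ (norm_nonneg z) hle
          · rw [norm_mul]
            have : ‖(ε : ℂ)‖ = 1 := by rcases hε with h | h <;> simp [h]
            rw [this, one_mul]; exact hle
      _ = 2 := by norm_num
  have h2 : (2 : ℝ) < (p : ℝ) ^ u := by exact_mod_cast hpu
  rw [habs] at hb
  linarith

private lemma weisner_factor (p n u : ℕ) (hp : p.Prime) (hn : 2 ≤ n)
    (hpu : (p : ℤ) ^ u > 2) (ε δ : ℤ) (hε : ε = 1 ∨ ε = -1) (hδ : δ = 1 ∨ δ = -1)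
    (g : ℤ[X]) (hdvd : g ∣ X ^ n + C ε * X + C (δ * (p : ℤ) ^ u)) (hdeg : 1 ≤ g.natDegree) :
    (p : ℤ) ∣ g.coeff 0 := by
  have hg0 : g ≠ 0 := fun h => by simp [h] at hdeg
  set G : ℂ[X] := g.map (Int.castRingHom ℂ) with hG
  have hinj : Function.Injective (Int.castRingHom ℂ) := fun a b h => by simpa using h
  have hGdeg : G.natDegree = g.natDegree := natDegree_map_eq_of_injective hinj g
  have hGne : G ≠ 0 := by
    intro h
    have := (Polynomial.map_eq_zero_iff hinj).mp h
    exact hg0 this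
  have hsplit : Splits G := IsAlgClosed.splits G
  have hroots : G.roots.card = g.natDegree := by
    rw [← hGdeg]; exact (splits_iff_card_roots.mp hsplit)
  -- every root of G has abs > 1
  have hroot_abs : ∀ r ∈ G.roots, 1 < ‖r‖ := by
    intro r hr
    obtain ⟨k, hk⟩ := hdvd
    apply weisner_root_abs p n u hn hpu ε δ hε hδ
    have hrG : G.IsRoot r := isRoot_of_mem_roots hr
    have : ((X ^ n + C ε * X + C (δ * (p : ℤ) ^ u)).map (Int.castRingHom ℂ))
        = G * (k.map (Int.castRingHom ℂ)) := by
      rw [hk, Polynomial.map_mul]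
    rw [IsRoot, this, eval_mul, hrG, zero_mul]
  -- |g.coeff 0| > 1
  have key : 1 < |(g.coeff 0 : ℝ)| := by
    have heq := hsplit.eq_prod_roots
    have heval : (g.coeff 0 : ℂ) = G.eval 0 := by
      rw [hG, eval_map]
      simp [eval₂_at_zero]
    have habs : ‖G.eval 0‖
        = ‖G.leadingCoeff‖ * (G.roots.map (fun r => ‖-r‖)).prod := by
      conv_lhs => rw [heq]
      rw [eval_mul, eval_C, norm_mul, eval_multiset_prod]
      congr 1
      rw [show ∀ m : Multiset ℂ, ‖m.prod‖ = (m.map (‖·‖)).prod from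
        fun m => map_multiset_prod (normHom (α := ℂ)) m, Multiset.map_map, Multiset.map_map]
      congr 1
      ext r
      simp
    have hlc : 1 ≤ ‖G.leadingCoeff‖ := by
      have : G.leadingCoeff = (g.leadingCoeff : ℂ) := by
        rw [hG]; exact leadingCoeff_map_of_leadingCoeff_ne_zero _ (by
          simpa using (Int.cast_ne_zero (α := ℂ)).mpr (leadingCoeff_ne_zero.mpr hg0))
      rw [this, Complex.norm_intCast]
      have : 1 ≤ |g.leadingCoeff| := Int.one_le_abs (leadingCoeff_ne_zero.mpr hg0)
      exact_mod_cast this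
    have hprod : 1 < (G.roots.map (fun r => ‖-r‖)).prod := by
      have hcard : G.roots ≠ 0 := by
        intro h
        rw [h] at hroots
        simp at hroots
        omega
      obtain ⟨r, hr⟩ := Multiset.exists_mem_of_ne_zero hcard
      obtain ⟨s, hs⟩ := Multiset.exists_cons_of_mem hr
      rw [hs, Multiset.map_cons, Multiset.prod_cons]
      have h1 : 1 < ‖-r‖ := by rw [norm_neg]; exact hroot_abs r hr
      have h2 : 1 ≤ (s.map (fun r => ‖-r‖)).prod := by
        apply Multiset.one_le_prod
        intro x hx
        obtain ⟨y, hy, rfl⟩ := Multiset.mem_map.mp hx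
        have : y ∈ G.roots := by rw [hs]; exact Multiset.mem_cons_of_mem hy
        have := hroot_abs y this
        rw [norm_neg]
        linarith
      nlinarith
    calc (1 : ℝ) < 1 * ((G.roots.map (fun r => ‖-r‖)).prod) := by linarith
      _ ≤ ‖G.leadingCoeff‖ * (G.roots.map (fun r => ‖-r‖)).prod := by
          apply mul_le_mul_of_nonneg_right hlc; linarith
      _ = ‖G.eval 0‖ := habs.symm
      _ = |(g.coeff 0 : ℝ)| := by rw [← heval, Complex.norm_intCast]
  have key' : 2 ≤ (g.coeff 0).natAbs := by
    have h1 : (1 : ℤ) < |g.coeff 0| := by exact_mod_cast key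
    rw [Int.abs_eq_natAbs] at h1
    omega
  have hδ2 : δ * δ = 1 := by rcases hδ with h | h <;> simp [h]
  have hf0 : (X ^ n + C ε * X + C (δ * (p : ℤ) ^ u)).coeff 0 = δ * (p : ℤ) ^ u := by
    rw [coeff_add, coeff_add, coeff_X_pow, coeff_C_mul, coeff_X_zero, coeff_C]
    simp only [if_neg (by omega : ¬ (0 = n))]
    simp
  have hdvd0 : g.coeff 0 ∣ (p : ℤ) ^ u := by
    have h1 : g.coeff 0 ∣ δ * (p : ℤ) ^ u := by
      obtain ⟨k, hk⟩ := hdvd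
      refine ⟨k.coeff 0, ?_⟩
      rw [← hf0, hk, mul_coeff_zero]
    exact h1.trans ⟨δ, by rw [mul_comm δ _, mul_assoc, hδ2, mul_one]⟩
  have hna : (g.coeff 0).natAbs ∣ p ^ u := by
    have := Int.natAbs_dvd_natAbs.mpr hdvd0
    rwa [Int.natAbs_pow, Int.natAbs_natCast] at this
  obtain ⟨i, hi, hieq⟩ := (Nat.dvd_prime_pow hp).mp hna
  have hi1 : i ≠ 0 := by
    intro h
    rw [h, pow_zero] at hieq
    omega
  have : p ∣ (g.coeff 0).natAbs := hieq ▸ dvd_pow_self p hi1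
  exact Int.dvd_natAbs.mp (by exact_mod_cast this)

theorem stmt_8 (p n u : ℕ) (hp : p.Prime) (hn : 2 ≤ n) (hu : 1 ≤ u)
    (hpu : (p : ℤ) ^ u > 2) (ε δ : ℤ) (hε : ε = 1 ∨ ε = -1) (hδ : δ = 1 ∨ δ = -1) :
    Irreducible ((X ^ n + C ε * X + C (δ * (p : ℤ) ^ u)).map (Int.castRingHom ℚ)) := by
  set f : ℤ[X] := X ^ n + C ε * X + C (δ * (p : ℤ) ^ u) with hf
  have hq : (C ε * X + C (δ * (p : ℤ) ^ u)).degree < (n : WithBot ℕ) := by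
    have h3 : (1 : WithBot ℕ) < (n : WithBot ℕ) := by exact_mod_cast (by omega : 1 < n)
    exact lt_of_le_of_lt degree_linear_le h3
  have hfeq : f = X ^ n + (C ε * X + C (δ * (p : ℤ) ^ u)) := by rw [hf, add_assoc]
  have hm : f.Monic := by rw [hfeq]; exact monic_X_pow_add hq
  have hdegf : f.degree = n := by
    rw [hfeq, degree_add_eq_left_of_degree_lt (by rwa [degree_X_pow]), degree_X_pow]
  have hdeg : f.natDegree = n := natDegree_eq_of_degree_eq_some hdegf
  rw [← Polynomial.IsPrimitive.Int.irreducible_iff_irreducible_map_cast hm.isPrimitive]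
  constructor
  · apply not_isUnit_of_natDegree_pos
    rw [hdeg]; omega
  · intro a b hab
    by_contra hcon
    push_neg at hcon
    obtain ⟨ha, hb⟩ := hcon
    have hlc : a.leadingCoeff * b.leadingCoeff = 1 := by
      have h := hm.leadingCoeff
      rw [hab, leadingCoeff_mul] at h
      exact h
    have hunit : ∀ q r : ℤ[X], q.leadingCoeff * r.leadingCoeff = 1 → q.natDegree = 0 →
        IsUnit q := by
      intro q r h h0
      rw [eq_C_of_natDegree_eq_zero h0]
      refine isUnit_C.mpr (IsUnit.of_mul_eq_one r.leadingCoeff ?_)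
      rwa [← h0, ← leadingCoeff]
    have ha1 : 1 ≤ a.natDegree := by
      by_contra h
      exact ha (hunit a b hlc (by omega))
    have hb1 : 1 ≤ b.natDegree := by
      by_contra h
      exact hb (hunit b a (by rw [mul_comm]; exact hlc) (by omega))
    have hpa : (p : ℤ) ∣ a.coeff 0 :=
      weisner_factor p n u hp hn hpu ε δ hε hδ a ⟨b, hab⟩ ha1
    have hpb : (p : ℤ) ∣ b.coeff 0 :=
      weisner_factor p n u hp hn hpu ε δ hε hδ b ⟨a, hab.trans (mul_comm a b)⟩ hb1
    have hc1 : f.coeff 1 = ε := by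
      rw [hf, coeff_add, coeff_add, coeff_X_pow, coeff_C_mul, coeff_X_one, coeff_C]
      rw [if_neg (by omega : ¬ (1 = n))]
      simp
    have hc1' : f.coeff 1 = a.coeff 0 * b.coeff 1 + a.coeff 1 * b.coeff 0 := by
      rw [hab, coeff_mul, Finset.Nat.sum_antidiagonal_eq_sum_range_succ_mk]
      simp [Finset.sum_range_succ]
    have hpε : (p : ℤ) ∣ ε := by
      rw [← hc1, hc1']
      exact dvd_add (hpa.mul_right _) ((hpb.mul_left _))
    have hp1 : (p : ℤ) ∣ 1 := by
      rcases hε with h | h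
      · rwa [h] at hpε
      · rw [h] at hpε
        exact (dvd_neg.mp hpε)
    have := Int.le_of_dvd one_pos hp1
    have h2 : 2 ≤ p := hp.two_le
    have : (2 : ℤ) ≤ (p : ℤ) := by exact_mod_cast h2
    omega
end

section
/- Let p be a prime number, u ≥ 1 and e ≥ 0 integers, and let a_0, a_1, ..., a_n be integers with a_n ≠ 0 and n ≥ 2. If p does not divide a_0 · a_1 and p^u > |a_1|·p^{2e} + Σ_{i=2}^{n} |a_0^{i-1} · a_i| · p^{i·e}, then the polynomial a_n x^n + a_{n-1} x^{n-1} + ... + a_2 x^2 + a_1 p^e x + a_0 p^u is irreducible over ℚ. -/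
open Polynomial Finset

private lemma pow_dvd_aux' {p : ℤ} (hp : Prime p) :
    ∀ (m : ℕ) {j : ℕ} {a b : ℤ}, p ^ m ∣ a * b → ¬ p ^ (j+1) ∣ a → p ^ (m - j) ∣ b := by
  intro m
  induction m with
  | zero => intro j a b _ _; simp
  | succ m ih =>
    intro j a b hdvd hnd
    rcases le_or_gt (j+1) (m+1) with hj | hj
    · have hpab : p ∣ a * b := dvd_trans (dvd_pow_self p (Nat.succ_ne_zero m)) hdvd
      rcases hp.dvd_mul.mp hpab with hpa | hpb
      · rcases j with _ | j
        · exact absurd (by simpa using hpa) hnd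
        · obtain ⟨a', rfl⟩ := hpa
          have h1 : p ^ m ∣ a' * b := by
            have := hdvd
            rw [pow_succ'] at this
            rw [mul_assoc] at this
            exact (mul_dvd_mul_iff_left hp.ne_zero).mp this
          have h2 : ¬ p ^ (j+1) ∣ a' := by
            intro h
            exact hnd (by rw [pow_succ']; exact mul_dvd_mul_left p h)
          have := ih h1 h2
          convert this using 2
          omega
      · obtain ⟨b', rfl⟩ := hpb
        have h1 : p ^ m ∣ a * b' := by
          have := hdvd
          rw [pow_succ', mul_comm a (p * b'), mul_assoc, mul_comm b' a] at this
          exact (mul_dvd_mul_iff_left hp.ne_zero).mp this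
        have := ih h1 hnd
        have hsub : m + 1 - j = (m - j) + 1 := by omega
        obtain ⟨c, hc⟩ := this
        rw [hsub, pow_succ']
        exact ⟨c, by rw [hc]; ring⟩
    · simp [Nat.sub_eq_zero_of_le (by omega : m + 1 ≤ j)]

private lemma multiset_prod_ge' {M : ℝ} (hM : 0 < M) :
    ∀ (s : Multiset ℝ), (∀ x ∈ s, M < x) → M ^ Multiset.card s ≤ s.prod := by
  intro s
  induction s using Multiset.induction with
  | empty => simp
  | cons a t ih =>
    intro h
    have ha := h a (Multiset.mem_cons_self a t)
    have ht := ih (fun x hx => h x (Multiset.mem_cons_of_mem hx))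
    simp only [Multiset.prod_cons, Multiset.card_cons, pow_succ']
    have hMt : (0:ℝ) < M ^ Multiset.card t := pow_pos hM _
    nlinarith

private lemma multiset_prod_gt' {M : ℝ} (hM : 0 < M) (s : Multiset ℝ) (hs : s ≠ 0)
    (h : ∀ x ∈ s, M < x) : M ^ Multiset.card s < s.prod := by
  obtain ⟨a, ha⟩ := Multiset.exists_mem_of_ne_zero hs
  obtain ⟨t, rfl⟩ := Multiset.exists_cons_of_mem ha
  have ha' := h _ (Multiset.mem_cons_self a t)
  have ht := multiset_prod_ge' hM t (fun x hx => h x (Multiset.mem_cons_of_mem hx))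
  have hMt : (0:ℝ) < M ^ Multiset.card t := pow_pos hM _
  simp only [Multiset.prod_cons, Multiset.card_cons, pow_succ']
  nlinarith

private lemma bb_root_bound (p n u e : ℕ) (a : ℕ → ℤ) (hp : 0 < p) (ha0 : a 0 ≠ 0)
    (hsum : (p : ℤ) ^ u >
      |a 1| * (p : ℤ) ^ (2 * e) +
        ∑ i ∈ Finset.Icc 2 n, |a 0 ^ (i - 1) * a i| * (p : ℤ) ^ (i * e))
    (z : ℂ)
    (hz : ((∑ i ∈ Finset.Icc 2 n, C (a i) * X ^ i + C (a 1 * (p : ℤ) ^ e) * X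
        + C (a 0 * (p : ℤ) ^ u)).map (Int.castRingHom ℂ)).eval z = 0) :
    |(a 0 : ℝ)| * (p : ℝ) ^ e < norm z := by
  by_contra hle
  push_neg at hle
  set M : ℝ := |(a 0 : ℝ)| * (p : ℝ) ^ e with hMdef
  have hpR : (0:ℝ) < (p:ℝ) := by exact_mod_cast hp
  have ha0R : (1:ℝ) ≤ |(a 0 : ℝ)| := by
    have : (1:ℤ) ≤ |a 0| := Int.one_le_abs ha0
    calc (1:ℝ) ≤ ((|a 0| : ℤ) : ℝ) := by exact_mod_cast this
    _ = |(a 0 : ℝ)| := by push_cast; ring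
  have hM0 : 0 < M := by positivity
  have heval : (a 0 : ℂ) * (p : ℂ) ^ u =
      -((a 1 : ℂ) * (p : ℂ) ^ e * z + ∑ i ∈ Finset.Icc 2 n, (a i : ℂ) * z ^ i) := by
    have h := hz
    simp only [Polynomial.map_add, Polynomial.map_sum, Polynomial.map_mul, Polynomial.map_pow,
      Polynomial.map_C, Polynomial.map_X, Polynomial.map_intCast, Polynomial.map_natCast,
      eval_add, eval_finset_sum, eval_mul, eval_pow, eval_C, eval_X, eval_intCast, eval_natCast,
      map_mul, map_pow, eq_intCast, Int.cast_natCast] at h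
    push_cast at h ⊢
    linear_combination h
  have hnorm : |(a 0:ℝ)| * (p:ℝ)^u ≤
      |(a 1:ℝ)| * (p:ℝ)^e * norm z
        + ∑ i ∈ Finset.Icc 2 n, |(a i : ℝ)| * (norm z) ^ i := by
    have h1 : norm ((a 0 : ℂ) * (p : ℂ) ^ u) = |(a 0:ℝ)| * (p:ℝ)^u := by
      simp [map_mul, map_pow, Complex.norm_intCast, Complex.norm_natCast]
    have h2 : norm ((a 1 : ℂ) * (p : ℂ) ^ e * z) =
        |(a 1:ℝ)| * (p:ℝ)^e * norm z := by
      simp [map_mul, map_pow, Complex.norm_intCast, Complex.norm_natCast]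
    calc |(a 0:ℝ)| * (p:ℝ)^u
        = norm ((a 0 : ℂ) * (p : ℂ) ^ u) := h1.symm
      _ = norm ((a 1 : ℂ) * (p : ℂ) ^ e * z
            + ∑ i ∈ Finset.Icc 2 n, (a i : ℂ) * z ^ i) := by rw [heval, norm_neg]
      _ ≤ norm ((a 1 : ℂ) * (p : ℂ) ^ e * z)
            + norm (∑ i ∈ Finset.Icc 2 n, (a i : ℂ) * z ^ i) :=
          norm_add_le _ _
      _ ≤ |(a 1:ℝ)| * (p:ℝ)^e * norm z
            + ∑ i ∈ Finset.Icc 2 n, |(a i : ℝ)| * (norm z) ^ i := by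
          rw [h2]
          refine add_le_add le_rfl ?_
          refine (norm_sum_le _ _).trans ?_
          refine Finset.sum_le_sum fun i _ => ?_
          simp [map_mul, map_pow, Complex.norm_intCast]
  have habs : 0 ≤ norm z := norm_nonneg _
  have hterm1 : |(a 1:ℝ)| * (p:ℝ)^e * norm z ≤ |(a 0:ℝ)| * (|(a 1:ℝ)| * (p:ℝ)^(2*e)) := by
    calc |(a 1:ℝ)| * (p:ℝ)^e * norm z ≤ |(a 1:ℝ)| * (p:ℝ)^e * M :=
          mul_le_mul_of_nonneg_left hle (by positivity)
    _ = |(a 0:ℝ)| * (|(a 1:ℝ)| * (p:ℝ)^(2*e)) := by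
        rw [hMdef, two_mul, pow_add]; ring
  have hterm2 : ∀ i ∈ Finset.Icc 2 n, |(a i:ℝ)| * (norm z) ^ i ≤
      |(a 0:ℝ)| * (|(a 0:ℝ)^(i-1) * (a i:ℝ)| * (p:ℝ)^(i*e)) := by
    intro i hi
    have hi2 : 2 ≤ i := (Finset.mem_Icc.mp hi).1
    have hzM : (norm z) ^ i ≤ M ^ i := pow_le_pow_left₀ habs hle i
    have key : |(a i:ℝ)| * M ^ i
        = |(a 0:ℝ)| * (|(a 0:ℝ)^(i-1) * (a i:ℝ)| * (p:ℝ)^(i*e)) := by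
      rw [hMdef, mul_pow, ← pow_mul, abs_mul, abs_pow]
      rw [show |(a 0:ℝ)| ^ i = |(a 0:ℝ)| * |(a 0:ℝ)| ^ (i-1) from by
        conv_lhs => rw [show i = (i-1)+1 by omega]
        rw [pow_succ]; ring]
      rw [mul_comm e i]; ring
    calc |(a i:ℝ)| * (norm z) ^ i ≤ |(a i:ℝ)| * M ^ i :=
          mul_le_mul_of_nonneg_left hzM (abs_nonneg _)
    _ = _ := key
  have hsumR : |(a 1:ℝ)| * (p:ℝ)^(2*e)
      + ∑ i ∈ Finset.Icc 2 n, |(a 0:ℝ)^(i-1) * (a i:ℝ)| * (p:ℝ)^(i*e) < (p:ℝ)^u := by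
    have := hsum
    push_cast at this
    exact_mod_cast this
  have hfin : |(a 0:ℝ)| * (p:ℝ)^u ≤ |(a 0:ℝ)| * (|(a 1:ℝ)| * (p:ℝ)^(2*e)
      + ∑ i ∈ Finset.Icc 2 n, |(a 0:ℝ)^(i-1) * (a i:ℝ)| * (p:ℝ)^(i*e)) := by
    refine hnorm.trans ?_
    rw [mul_add, Finset.mul_sum]
    exact add_le_add hterm1 (Finset.sum_le_sum hterm2)
  nlinarith [hfin, hsumR, ha0R]

private lemma bb_factor_bound (f g : ℤ[X]) (M : ℝ) (hM : 0 < M)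
    (hroot : ∀ z : ℂ, (f.map (Int.castRingHom ℂ)).eval z = 0 → M < norm z)
    (hgdvd : g ∣ f) (hf0 : f ≠ 0) (hgdeg : 1 ≤ g.natDegree) :
    M ^ g.natDegree < |(g.coeff 0 : ℝ)| := by
  have hg0 : g ≠ 0 := by
    rintro rfl
    exact hf0 (zero_dvd_iff.mp hgdvd)
  set G : ℂ[X] := g.map (Int.castRingHom ℂ) with hGdef
  have hinj : Function.Injective (Int.castRingHom ℂ) := by exact_mod_cast Int.cast_injective
  have hG0 : G ≠ 0 := (Polynomial.map_ne_zero_iff hinj).mpr hg0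
  have hsplits : G.Splits := IsAlgClosed.splits _
  have hfact := hsplits.eq_prod_roots
  have hdeg : G.natDegree = g.natDegree := natDegree_map_eq_of_injective hinj g
  have hcard : Multiset.card G.roots = g.natDegree := by
    rw [← hdeg]
    exact (splits_iff_card_roots.mp hsplits)
  have heval0 : G.eval 0 = G.leadingCoeff * (G.roots.map fun z => -z).prod := by
    conv_lhs => rw [hfact]
    rw [eval_mul, eval_C, eval_multiset_prod, Multiset.map_map]
    simp
  have habs : norm (G.eval 0)
      = norm G.leadingCoeff * ((G.roots.map fun z => -z).map norm).prod := by
    rw [heval0, norm_mul]; congr 1; exact map_multiset_prod (normHom : ℂ →*₀ ℝ) _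
  have hprodmap : ((G.roots.map fun z => -z).map norm) = G.roots.map norm := by
    rw [Multiset.map_map]
    exact Multiset.map_congr rfl (fun x _ => by simp)
  have hlc : (1:ℝ) ≤ norm G.leadingCoeff := by
    have : G.leadingCoeff = (g.leadingCoeff : ℂ) := by
      rw [hGdef, Polynomial.leadingCoeff_map_of_leadingCoeff_ne_zero]
      · rfl
      · intro h
        exact leadingCoeff_ne_zero.mpr hg0
          (by exact_mod_cast (show ((g.leadingCoeff : ℤ) : ℂ) = 0 from h))
    rw [this, Complex.norm_intCast]
    have : (1:ℤ) ≤ |g.leadingCoeff| := Int.one_le_abs (leadingCoeff_ne_zero.mpr hg0)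
    calc (1:ℝ) ≤ ((|g.leadingCoeff| : ℤ) : ℝ) := by exact_mod_cast this
    _ = |(g.leadingCoeff : ℝ)| := by push_cast; ring
  have hroots : ∀ x ∈ G.roots.map norm, M < x := by
    intro x hx
    obtain ⟨z, hz, rfl⟩ := Multiset.mem_map.mp hx
    have hzroot : G.eval z = 0 := (mem_roots hG0).mp hz
    have : (f.map (Int.castRingHom ℂ)).eval z = 0 := by
      obtain ⟨h', rfl⟩ := hgdvd
      rw [Polynomial.map_mul, eval_mul, hGdef] at *
      rw [hzroot, zero_mul]
    exact hroot z this
  have hne : G.roots.map norm ≠ 0 := by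
    intro h
    have := Multiset.card_eq_zero.mpr h
    rw [Multiset.card_map, hcard] at this
    omega
  have hprod : M ^ g.natDegree < (G.roots.map norm).prod := by
    have := multiset_prod_gt' hM _ hne hroots
    rwa [Multiset.card_map, hcard] at this
  have hcoeff : norm (G.eval 0) = |(g.coeff 0 : ℝ)| := by
    rw [hGdef, eval_map, eval₂_at_zero]
    simp [Complex.norm_intCast]
  calc M ^ g.natDegree < (G.roots.map norm).prod := hprod
    _ ≤ norm G.leadingCoeff * ((G.roots.map fun z => -z).map norm).prod := by
        rw [hprodmap]
        nlinarith [Multiset.prod_nonneg (s := G.roots.map norm)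
          (fun x hx => le_of_lt (hM.trans (hroots x hx)))]
    _ = norm (G.eval 0) := habs.symm
    _ = |(g.coeff 0 : ℝ)| := hcoeff

private lemma bb_coeff_zero (p n u e : ℕ) (a : ℕ → ℤ) :
    (∑ i ∈ Finset.Icc 2 n, C (a i) * X ^ i + C (a 1 * (p : ℤ) ^ e) * X
      + C (a 0 * (p : ℤ) ^ u)).coeff 0 = a 0 * (p:ℤ)^u := by
  rw [coeff_add, coeff_add, finset_sum_coeff, coeff_C_zero]
  rw [Finset.sum_eq_zero, coeff_C_mul, coeff_X_zero, mul_zero, zero_add, zero_add]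
  intro i hi
  have : 2 ≤ i := (Finset.mem_Icc.mp hi).1
  rw [coeff_C_mul, coeff_X_pow, if_neg (by omega), mul_zero]

private lemma bb_coeff_one (p n u e : ℕ) (a : ℕ → ℤ) :
    (∑ i ∈ Finset.Icc 2 n, C (a i) * X ^ i + C (a 1 * (p : ℤ) ^ e) * X
      + C (a 0 * (p : ℤ) ^ u)).coeff 1 = a 1 * (p:ℤ)^e := by
  rw [coeff_add, coeff_add, finset_sum_coeff, coeff_C]
  rw [Finset.sum_eq_zero, coeff_C_mul, coeff_X_one, mul_one, zero_add, if_neg one_ne_zero,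
    add_zero]
  intro i hi
  have : 2 ≤ i := (Finset.mem_Icc.mp hi).1
  rw [coeff_C_mul, coeff_X_pow, if_neg (by omega), mul_zero]

private lemma bb_coeff_n (p n u e : ℕ) (a : ℕ → ℤ) (hn : 2 ≤ n) :
    (∑ i ∈ Finset.Icc 2 n, C (a i) * X ^ i + C (a 1 * (p : ℤ) ^ e) * X
      + C (a 0 * (p : ℤ) ^ u)).coeff n = a n := by
  rw [coeff_add, coeff_add, finset_sum_coeff]
  have h1 : (C (a 1 * (p:ℤ)^e) * X).coeff n = 0 := by
    rw [coeff_C_mul, coeff_X, if_neg (by omega), mul_zero]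
  have h2 : (C (a 0 * (p:ℤ)^u)).coeff n = 0 := by
    rw [coeff_C, if_neg (by omega)]
  rw [h1, h2, add_zero, add_zero, Finset.sum_eq_single n]
  · rw [coeff_C_mul, coeff_X_pow, if_pos rfl, mul_one]
  · intro i hi hne
    rw [coeff_C_mul, coeff_X_pow, if_neg (Ne.symm hne), mul_zero]
  · intro h
    exact absurd (Finset.mem_Icc.mpr ⟨hn, le_refl n⟩) h

private lemma bb_key (p n u e : ℕ) (a : ℕ → ℤ) (hp : p.Prime) (hn : 2 ≤ n)
    (ha0 : a 0 ≠ 0) (ha1 : a 1 ≠ 0)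
    (hsum : (p : ℤ) ^ u >
      |a 1| * (p : ℤ) ^ (2 * e) +
        ∑ i ∈ Finset.Icc 2 n, |a 0 ^ (i - 1) * a i| * (p : ℤ) ^ (i * e))
    (g h : ℤ[X])
    (hfgh : (∑ i ∈ Finset.Icc 2 n, C (a i) * X ^ i + C (a 1 * (p : ℤ) ^ e) * X
      + C (a 0 * (p : ℤ) ^ u)) = g * h)
    (hgdeg : 1 ≤ g.natDegree) (hhdeg : 1 ≤ h.natDegree)
    (hge : ¬ (p:ℤ)^(e+1) ∣ g.coeff 0) : False := by
  set f : ℤ[X] := ∑ i ∈ Finset.Icc 2 n, C (a i) * X ^ i + C (a 1 * (p : ℤ) ^ e) * X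
      + C (a 0 * (p : ℤ) ^ u) with hfdef
  have hp1 : (1:ℤ) < (p:ℤ) := by exact_mod_cast hp.one_lt
  have hppos : (0:ℤ) < (p:ℤ) := by linarith
  -- u > 2e
  have hue : 2*e < u := by
    have h1 : (p:ℤ)^(2*e) ≤ |a 1| * (p:ℤ)^(2*e) :=
      le_mul_of_one_le_left (by positivity) (Int.one_le_abs ha1)
    have h2 : (0:ℤ) ≤ ∑ i ∈ Finset.Icc 2 n, |a 0 ^ (i - 1) * a i| * (p : ℤ) ^ (i * e) :=
      Finset.sum_nonneg fun i _ => by positivity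
    have : (p:ℤ)^(2*e) < (p:ℤ)^u := by linarith
    exact (pow_lt_pow_iff_right₀ hp1).mp this
  -- constant coefficients
  have hc0 : g.coeff 0 * h.coeff 0 = a 0 * (p:ℤ)^u := by
    rw [← mul_coeff_zero, ← hfgh, bb_coeff_zero]
  have hc0ne : g.coeff 0 * h.coeff 0 ≠ 0 := by
    rw [hc0]
    positivity
  have hh0ne : h.coeff 0 ≠ 0 := fun hh => hc0ne (by rw [hh, mul_zero])
  have hdvdu : (p:ℤ)^u ∣ g.coeff 0 * h.coeff 0 := by
    exact ⟨a 0, by rw [hc0]; ring⟩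
  have hh0dvd : (p:ℤ)^(u-e) ∣ h.coeff 0 := pow_dvd_aux' (Nat.prime_iff_prime_int.mp hp) u hdvdu hge
  have hh0abs : (p:ℤ)^(u-e) ≤ |h.coeff 0| :=
    Int.le_of_dvd (abs_pos.mpr hh0ne) ((dvd_abs _ _).mpr hh0dvd)
  -- factor bound on g
  have hf0 : f ≠ 0 := by
    intro hzero
    have := bb_coeff_zero p n u e a
    rw [← hfdef, hzero, coeff_zero] at this
    exact hc0ne (by rw [hc0, ← this])
  set M : ℝ := |(a 0 : ℝ)| * (p:ℝ)^e with hMdef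
  have hpR : (1:ℝ) < (p:ℝ) := by exact_mod_cast hp.one_lt
  have ha0R : (1:ℝ) ≤ |(a 0 : ℝ)| := by
    have : (1:ℤ) ≤ |a 0| := Int.one_le_abs ha0
    calc (1:ℝ) ≤ ((|a 0| : ℤ) : ℝ) := by exact_mod_cast this
    _ = |(a 0 : ℝ)| := by push_cast; ring
  have hM1 : (1:ℝ) ≤ M := by
    rw [hMdef]
    have : (1:ℝ) ≤ (p:ℝ)^e := one_le_pow₀ (le_of_lt hpR)
    nlinarith
  have hM0 : (0:ℝ) < M := lt_of_lt_of_le one_pos hM1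
  have hgb : M ^ g.natDegree < |(g.coeff 0 : ℝ)| := by
    refine bb_factor_bound f g M hM0 ?_ ⟨h, hfgh⟩ hf0 hgdeg
    intro z hz
    exact bb_root_bound p n u e a hp.pos ha0 hsum z (by rw [← hfdef]; exact hz)
  have hgb' : M < |(g.coeff 0 : ℝ)| :=
    lt_of_le_of_lt (le_self_pow₀ hM1 (by omega)) hgb
  -- combine
  have hh0R : ((p:ℝ))^(u-e) ≤ |(h.coeff 0 : ℝ)| := by
    calc ((p:ℝ))^(u-e) = (((p:ℤ)^(u-e) : ℤ) : ℝ) := by push_cast; ring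
    _ ≤ ((|h.coeff 0| : ℤ) : ℝ) := by exact_mod_cast hh0abs
    _ = |(h.coeff 0 : ℝ)| := by push_cast; ring
  have hmulR : |(g.coeff 0 : ℝ)| * |(h.coeff 0 : ℝ)| = |(a 0:ℝ)| * (p:ℝ)^u := by
    rw [← abs_mul]
    have : ((g.coeff 0 * h.coeff 0 : ℤ) : ℝ) = ((a 0 * (p:ℤ)^u : ℤ) : ℝ) := by
      exact_mod_cast congrArg (fun x : ℤ => (x:ℝ)) hc0
    push_cast at this
    rw [this, abs_mul]
    congr 1
    rw [abs_of_pos]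
    positivity
  have hpow : (p:ℝ)^e * (p:ℝ)^(u-e) = (p:ℝ)^u := by
    rw [← pow_add]
    congr 1
    omega
  have hposg : (0:ℝ) < |(g.coeff 0 : ℝ)| := lt_of_le_of_lt (le_of_lt hM0) hgb'
  have hpospow : (0:ℝ) < (p:ℝ)^(u-e) := by positivity
  have : |(a 0:ℝ)| * (p:ℝ)^u < |(g.coeff 0 : ℝ)| * |(h.coeff 0 : ℝ)| := by
    have hM' : M * (p:ℝ)^(u-e) = |(a 0:ℝ)| * (p:ℝ)^u := by rw [hMdef, mul_assoc, hpow]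
    nlinarith [hgb', hh0R, hpospow, hposg, hM0]
  rw [hmulR] at this
  exact lt_irrefl _ this

theorem stmt_9 (p n u e : ℕ) (a : ℕ → ℤ) (hp : p.Prime) (hu : 1 ≤ u) (hn : 2 ≤ n)
    (han : a n ≠ 0) (hpa : ¬ (p : ℤ) ∣ a 0 * a 1)
    (hsum : (p : ℤ) ^ u >
      |a 1| * (p : ℤ) ^ (2 * e) +
        ∑ i ∈ Finset.Icc 2 n, |a 0 ^ (i - 1) * a i| * (p : ℤ) ^ (i * e)) :
    Irreducible ((∑ i ∈ Finset.Icc 2 n, C (a i) * X ^ i +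
        C (a 1 * (p : ℤ) ^ e) * X + C (a 0 * (p : ℤ) ^ u)).map
      (Int.castRingHom ℚ)) := by
  set f : ℤ[X] := ∑ i ∈ Finset.Icc 2 n, C (a i) * X ^ i +
      C (a 1 * (p : ℤ) ^ e) * X + C (a 0 * (p : ℤ) ^ u) with hfdef
  have ha0 : a 0 ≠ 0 := by
    intro h
    exact hpa (by rw [h, zero_mul]; exact dvd_zero _)
  have ha1 : a 1 ≠ 0 := by
    intro h
    exact hpa (by rw [h, mul_zero]; exact dvd_zero _)
  have hpa1 : ¬ (p:ℤ) ∣ a 1 := fun h => hpa (Dvd.dvd.mul_left h (a 0))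
  have hfn : f.coeff n = a n := bb_coeff_n p n u e a hn
  have hndeg : n ≤ f.natDegree := le_natDegree_of_ne_zero (by rw [hfn]; exact han)
  have hf0 : f ≠ 0 := by
    intro h
    rw [h, coeff_zero] at hfn
    exact han hfn.symm
  have hppos : (0:ℤ) < (p:ℤ) := by exact_mod_cast hp.pos
  -- main: no factorization with both degrees ≥ 1
  have main : ∀ g h : ℤ[X], f = g * h → 1 ≤ g.natDegree → 1 ≤ h.natDegree → False := by
    intro g h hfgh hg hh
    have hcoeff1 : g.coeff 0 * h.coeff 1 + g.coeff 1 * h.coeff 0 = a 1 * (p:ℤ)^e := by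
      have := bb_coeff_one p n u e a
      rw [← hfdef] at this
      rw [← this, hfgh, coeff_mul]
      rw [show Finset.HasAntidiagonal.antidiagonal 1 = {(0,1), (1,0)} from rfl]
      simp [Finset.sum_insert, Finset.mem_singleton]
    by_cases hcase : (p:ℤ)^(e+1) ∣ g.coeff 0
    · by_cases hcase2 : (p:ℤ)^(e+1) ∣ h.coeff 0
      · -- contradiction: p ∣ a 1
        have hdvd : (p:ℤ)^(e+1) ∣ a 1 * (p:ℤ)^e := by
          rw [← hcoeff1]
          exact dvd_add (hcase.mul_right _) (hcase2.mul_left _)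
        obtain ⟨c, hc⟩ := hdvd
        have hpe : ((p:ℤ)^e) ≠ 0 := by positivity
        apply hpa1
        refine ⟨c, ?_⟩
        have : a 1 * (p:ℤ)^e = ((p:ℤ) * c) * (p:ℤ)^e := by
          rw [hc, pow_succ]; ring
        exact mul_right_cancel₀ hpe this
      · exact bb_key p n u e a hp hn ha0 ha1 hsum h g (by rw [← hfdef, hfgh, mul_comm])
          hh hg hcase2
    · exact bb_key p n u e a hp hn ha0 ha1 hsum g h (by rw [← hfdef, hfgh]) hg hh hcase
  -- pass to primitive part
  set q : ℤ[X] := f.primPart with hqdef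
  have hq : f = C f.content * q := f.eq_C_content_mul_primPart
  have hcont0 : f.content ≠ 0 := fun h => hf0 (content_eq_zero_iff.mp h)
  have hqprim : q.IsPrimitive := f.isPrimitive_primPart
  have hqdeg : q.natDegree = f.natDegree := f.natDegree_primPart
  have hqirr : Irreducible q := by
    constructor
    · intro hunit
      have := natDegree_eq_zero_of_isUnit hunit
      omega
    · intro g h hq'
      by_contra hcon
      push_neg at hcon
      obtain ⟨hgnu, hhnu⟩ := hcon
      have hcontmul : g.content * h.content = 1 := by
        have := content_mul (p := g) (q := h)
        rw [← hq', hqprim.content_eq_one] at this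
        exact this.symm
      have hgprim : g.IsPrimitive := by
        rw [isPrimitive_iff_content_eq_one, ← g.normalize_content]
        exact normalize_eq_one.mpr (IsUnit.of_mul_eq_one _ hcontmul)
      have hhprim : h.IsPrimitive := by
        rw [isPrimitive_iff_content_eq_one, ← h.normalize_content]
        exact normalize_eq_one.mpr
          (IsUnit.of_mul_eq_one _ (by rw [mul_comm] at hcontmul; exact hcontmul))
      have hgdeg : 1 ≤ g.natDegree := by
        rcases Nat.eq_zero_or_pos g.natDegree with h0 | h0
        · exfalso
          apply hgnu
          rw [Polynomial.eq_C_of_natDegree_eq_zero h0]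
          refine isUnit_C.mpr (hgprim (g.coeff 0) ?_)
          rw [← Polynomial.eq_C_of_natDegree_eq_zero h0]
        · exact h0
      have hhdeg : 1 ≤ h.natDegree := by
        rcases Nat.eq_zero_or_pos h.natDegree with h0 | h0
        · exfalso
          apply hhnu
          rw [Polynomial.eq_C_of_natDegree_eq_zero h0]
          refine isUnit_C.mpr (hhprim (h.coeff 0) ?_)
          rw [← Polynomial.eq_C_of_natDegree_eq_zero h0]
        · exact h0
      refine main (C f.content * g) h ?_ ?_ hhdeg
      · rw [mul_assoc, ← hq', ← hq]
      · rwa [natDegree_C_mul hcont0]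
  have hmapq : Irreducible (q.map (Int.castRingHom ℚ)) :=
    (Polynomial.IsPrimitive.Int.irreducible_iff_irreducible_map_cast hqprim).mp hqirr
  have hmapeq : f.map (Int.castRingHom ℚ)
      = C ((f.content : ℚ)) * q.map (Int.castRingHom ℚ) := by
    conv_lhs => rw [hq]
    rw [Polynomial.map_mul, map_C]
    rfl
  rw [hmapeq]
  have hunit : IsUnit (C ((f.content : ℚ))) :=
    isUnit_C.mpr (isUnit_iff_ne_zero.mpr (by exact_mod_cast hcont0))
  exact Associated.irreducible ⟨hunit.unit, by rw [IsUnit.unit_spec]; ring⟩ hmapq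
end

section
/- Let p be a prime number, u ≥ 1 and e ≥ 0 integers with u ≢ e (mod 2), and let a_0, a_2, a_3, ..., a_n be integers with a_n ≠ 0 and n ≥ 3. If p does not divide a_0 · a_2 and p^u > |a_0 · a_2|·p^{3e} + Σ_{i=3}^{n} |a_0^{i-1} · a_i| · p^{i·e}, then the polynomial a_n x^n + a_{n-1} x^{n-1} + ... + a_3 x^3 + a_2 p^e x^2 + a_0 p^u is irreducible over ℚ. -/
open Polynomial Finset

noncomputable def Complex.abs : AbsoluteValue ℂ ℝ := IsAbsoluteValue.toAbsoluteValue (norm : ℂ → ℝ)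

lemma Complex.abs_apply (z : ℂ) : Complex.abs z = ‖z‖ := rfl

lemma Complex.abs_intCast (n : ℤ) : Complex.abs (n : ℂ) = |(n : ℝ)| := by
  rw [Complex.abs_apply, Complex.norm_intCast]

lemma Complex.abs_natCast (n : ℕ) : Complex.abs (n : ℂ) = n := by
  rw [Complex.abs_apply, Complex.norm_natCast]

lemma aux_pow_card_lt_prod (t : ℝ) (ht : 0 ≤ t) :
    ∀ (s : Multiset ℝ), (∀ x ∈ s, t < x) → s ≠ 0 → t ^ Multiset.card s < s.prod := by
  intro s
  induction s using Multiset.induction with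
  | empty => intro _ hs; exact absurd rfl hs
  | cons a s ih =>
    intro hmem _
    have ha : t < a := hmem a (Multiset.mem_cons_self a s)
    rcases eq_or_ne s 0 with rfl | hs
    · simpa using ha
    · have hprod := ih (fun x hx => hmem x (Multiset.mem_cons_of_mem hx)) hs
      have h0 : (0:ℝ) < s.prod := lt_of_le_of_lt (pow_nonneg ht _) hprod
      rw [Multiset.card_cons, Multiset.prod_cons, pow_succ, mul_comm (t ^ Multiset.card s) t]
      calc t * t ^ Multiset.card s ≤ t * s.prod := by
            exact mul_le_mul_of_nonneg_left hprod.le ht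
        _ < a * s.prod := by exact mul_lt_mul_of_pos_right ha h0

-- |g(0)| > T^(deg g) where T = |a0|*p^e, for g a nonconstant factor of f
lemma aux_abs_coeff_zero_lt (T : ℤ) (hT : 0 < T) (f g : Polynomial ℤ) (hgf : g ∣ f)
    (hg0 : g.coeff 0 ≠ 0) (hm : 1 ≤ g.natDegree)
    (hroot : ∀ θ : ℂ, (f.map (Int.castRingHom ℂ)).eval θ = 0 → ((T : ℝ)) < Complex.abs θ) :
    T ^ g.natDegree < |g.coeff 0| := by
  set φ := Int.castRingHom ℂ
  have hinj : Function.Injective (φ : ℤ →+* ℂ) := Int.cast_injective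
  have hgne : g ≠ 0 := fun h => hg0 (by simp [h])
  set G := g.map φ with hG
  have hGne : G ≠ 0 := (Polynomial.map_ne_zero_iff hinj).mpr hgne
  have hGdeg : G.natDegree = g.natDegree := natDegree_map_eq_of_injective hinj g
  have hsplit : Splits G := IsAlgClosed.splits G
  have hcard : Multiset.card G.roots = g.natDegree := by
    rw [← hGdeg]; exact (splits_iff_card_roots).mp hsplit
  have hGeq := hsplit.eq_prod_roots
  -- evaluate at 0
  have heval : G.eval 0 = (g.coeff 0 : ℂ) := by
    rw [hG, Polynomial.eval_map, Polynomial.eval₂_at_zero]; rfl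
  have heval2 : G.eval 0 = G.leadingCoeff * (Multiset.map (fun a => (0:ℂ) - a) G.roots).prod := by
    conv_lhs => rw [hGeq]
    rw [eval_mul, eval_C, eval_multiset_prod, Multiset.map_map]
    simp [Function.comp]
  -- abs
  have habs : Complex.abs (G.eval 0)
      = Complex.abs G.leadingCoeff * (Multiset.map Complex.abs G.roots).prod := by
    rw [heval2, map_mul, map_multiset_prod, Multiset.map_map]
    congr 1
    apply congrArg Multiset.prod
    apply Multiset.map_congr rfl
    intro x _
    simp
  -- roots of G are roots of f
  have hFroot : ∀ θ ∈ G.roots, (T:ℝ) < Complex.abs θ := by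
    intro θ hθ
    apply hroot
    obtain ⟨c, hc⟩ := hgf
    have : f.map φ = G * c.map φ := by rw [hc, Polynomial.map_mul]
    rw [this, eval_mul, (Polynomial.isRoot_of_mem_roots hθ).eq_zero, zero_mul]
  -- product bound
  have hprodlt : (T:ℝ) ^ g.natDegree < (Multiset.map Complex.abs G.roots).prod := by
    have := aux_pow_card_lt_prod (T:ℝ) (by exact_mod_cast hT.le)
      (Multiset.map Complex.abs G.roots)
      (by intro x hx
          obtain ⟨θ, hθ, rfl⟩ := Multiset.mem_map.mp hx
          exact hFroot θ hθ)
      (by intro h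
          have : Multiset.card (Multiset.map Complex.abs G.roots) = g.natDegree := by
            rw [Multiset.card_map, hcard]
          rw [h] at this
          simp at this; omega)
    rwa [Multiset.card_map, hcard] at this
  -- leading coeff abs ≥ 1
  have hlead : (1:ℝ) ≤ Complex.abs G.leadingCoeff := by
    have h1 : G.leadingCoeff = (g.leadingCoeff : ℂ) := by
      rw [hG, Polynomial.leadingCoeff_map_of_injective hinj]; rfl
    rw [h1]
    rw [Complex.abs_intCast]
    exact_mod_cast Int.one_le_abs (leadingCoeff_ne_zero.mpr hgne)
  have hfinal : ((T:ℝ)) ^ g.natDegree < (|g.coeff 0| : ℝ) := by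
    have h2 : (|g.coeff 0| : ℝ) = Complex.abs (G.eval 0) := by
      rw [heval, Complex.abs_intCast]
    rw [h2, habs]
    calc (T:ℝ) ^ g.natDegree < (Multiset.map Complex.abs G.roots).prod := hprodlt
      _ = 1 * (Multiset.map Complex.abs G.roots).prod := (one_mul _).symm
      _ ≤ Complex.abs G.leadingCoeff * (Multiset.map Complex.abs G.roots).prod := by
          apply mul_le_mul_of_nonneg_right hlead
          apply Multiset.prod_nonneg
          intro x hx
          obtain ⟨θ, _, rfl⟩ := Multiset.mem_map.mp hx
          exact AbsoluteValue.nonneg _ _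
  exact_mod_cast hfinal

lemma aux_val_lb (p u e : ℕ) (hp : p.Prime) (a0 : ℤ) (hpa0 : ¬ (p:ℤ) ∣ a0)
    (f g h : Polynomial ℤ) (hf : f = g * h) (hf0 : f.coeff 0 = a0 * (p:ℤ) ^ u)
    (hm : 1 ≤ g.natDegree)
    (hroot : ∀ θ : ℂ, (f.map (Int.castRingHom ℂ)).eval θ = 0 →
      (((|a0| * (p:ℤ) ^ e : ℤ)) : ℝ) < Complex.abs θ) :
    e < padicValInt p (g.coeff 0) := by
  haveI : Fact p.Prime := ⟨hp⟩
  have hppos : (0:ℤ) < (p:ℤ) := by exact_mod_cast hp.pos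
  have ha0 : a0 ≠ 0 := fun h0 => hpa0 (h0 ▸ dvd_zero _)
  have hprodc : g.coeff 0 * h.coeff 0 = a0 * (p:ℤ) ^ u := by
    rw [← mul_coeff_zero, ← hf, hf0]
  have hrhs : a0 * (p:ℤ) ^ u ≠ 0 := mul_ne_zero ha0 (pow_ne_zero _ (by positivity))
  have hg0 : g.coeff 0 ≠ 0 := fun h0 => hrhs (by rw [← hprodc, h0, zero_mul])
  have hh0 : h.coeff 0 ≠ 0 := fun h0 => hrhs (by rw [← hprodc, h0, mul_zero])
  set k := padicValInt p (g.coeff 0) with hk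
  set l := padicValInt p (h.coeff 0) with hl
  have hval_pu : padicValInt p ((p:ℤ) ^ u) = u := by
    rw [show ((p:ℤ) ^ u) = ((p ^ u : ℕ) : ℤ) by push_cast; ring]
    rw [padicValInt.of_nat, padicValNat.prime_pow]
  have hkl : k + l = u := by
    have h1 : padicValInt p (g.coeff 0 * h.coeff 0) = k + l := padicValInt.mul hg0 hh0
    rw [hprodc, padicValInt.mul ha0 (pow_ne_zero _ (by positivity)),
      padicValInt.eq_zero_of_not_dvd hpa0, hval_pu, zero_add] at h1
    omega
  -- g.coeff 0 = p^k * b with b ∣ a0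
  obtain ⟨b, hb⟩ : (p:ℤ) ^ k ∣ g.coeff 0 := padicValInt_dvd _
  obtain ⟨c, hc⟩ : (p:ℤ) ^ l ∣ h.coeff 0 := padicValInt_dvd _
  have hbc : b * c = a0 := by
    rw [hb, hc, ← hkl, pow_add] at hprodc
    have h2 : (p:ℤ) ^ k * (p:ℤ) ^ l * (b * c) = (p:ℤ) ^ k * (p:ℤ) ^ l * a0 := by
      linear_combination hprodc
    exact mul_left_cancel₀ (mul_ne_zero (pow_ne_zero _ (by positivity)) (pow_ne_zero _ (by positivity))) h2
  have hbne : b ≠ 0 := fun h0 => ha0 (by rw [← hbc, h0, zero_mul])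
  have hcne : c ≠ 0 := fun h0 => ha0 (by rw [← hbc, h0, mul_zero])
  have hba0 : |b| ≤ |a0| := by
    have : b ∣ a0 := ⟨c, hbc.symm⟩
    exact Int.le_of_dvd (abs_pos.mpr ha0) ((abs_dvd _ _).mpr ((dvd_abs _ _).mpr this))
  -- archimedean bound
  set T : ℤ := |a0| * (p:ℤ) ^ e with hT
  have hTpos : 0 < T := mul_pos (abs_pos.mpr ha0) (pow_pos hppos e)
  have habs : T ^ g.natDegree < |g.coeff 0| :=
    aux_abs_coeff_zero_lt T hTpos f g ⟨h, hf⟩ hg0 hm hroot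
  -- conclude
  have hgabs : |g.coeff 0| = (p:ℤ) ^ k * |b| := by
    rw [hb, abs_mul, abs_pow, abs_of_pos hppos]
  set m := g.natDegree with hmdef
  have h1 : T ^ m = |a0| ^ m * ((p:ℤ) ^ e) ^ m := mul_pow _ _ _
  have h2 : |b| * ((p:ℤ) ^ e) ^ m ≤ |a0| ^ m * ((p:ℤ) ^ e) ^ m := by
    apply mul_le_mul_of_nonneg_right _ (by positivity)
    calc |b| ≤ |a0| := hba0
      _ ≤ |a0| ^ m := le_self_pow₀ (Int.one_le_abs ha0) (by omega)
  have h3 : |b| * ((p:ℤ) ^ e) ^ m < (p:ℤ) ^ k * |b| := by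
    calc |b| * ((p:ℤ) ^ e) ^ m ≤ |a0| ^ m * ((p:ℤ) ^ e) ^ m := h2
      _ = T ^ m := h1.symm
      _ < |g.coeff 0| := habs
      _ = (p:ℤ) ^ k * |b| := hgabs
  have h4 : ((p:ℤ) ^ e) ^ m < (p:ℤ) ^ k := by
    have hbpos : (0:ℤ) < |b| := abs_pos.mpr hbne
    have := h3
    rw [mul_comm |b| _, mul_comm ((p:ℤ) ^ k) |b|, mul_comm |b| _] at this
    exact lt_of_mul_lt_mul_right this hbpos.le
  have h5 : (p:ℤ) ^ (e * m) < (p:ℤ) ^ k := by rwa [pow_mul]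
  have h6 : e * m < k := by
    have hp1 : (1:ℤ) < (p:ℤ) := by exact_mod_cast hp.one_lt
    exact (pow_lt_pow_iff_right₀ hp1).mp h5
  calc e = e * 1 := (mul_one e).symm
    _ ≤ e * m := Nat.mul_le_mul_left e hm
    _ < k := h6

lemma aux_core (p u e : ℕ) (hp : p.Prime) (a0 a2 : ℤ) (hue : u % 2 ≠ e % 2)
    (hpa0 : ¬ (p:ℤ) ∣ a0) (hpa2 : ¬ (p:ℤ) ∣ a2) (f : Polynomial ℤ)
    (hc0 : f.coeff 0 = a0 * (p:ℤ) ^ u) (hc1 : f.coeff 1 = 0)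
    (hc2 : f.coeff 2 = a2 * (p:ℤ) ^ e)
    (hroot : ∀ θ : ℂ, (f.map (Int.castRingHom ℂ)).eval θ = 0 →
      (((|a0| * (p:ℤ) ^ e : ℤ)) : ℝ) < Complex.abs θ) :
    ∀ g h : Polynomial ℤ, f = g * h → 1 ≤ g.natDegree → 1 ≤ h.natDegree → False := by
  haveI : Fact p.Prime := ⟨hp⟩
  have ha0 : a0 ≠ 0 := fun h0 => hpa0 (h0 ▸ dvd_zero _)
  have hpne : (p:ℤ) ≠ 0 := by exact_mod_cast hp.ne_zero
  intro g h hf hmg hmh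
  have hk := aux_val_lb p u e hp a0 hpa0 f g h hf hc0 hmg hroot
  have hl := aux_val_lb p u e hp a0 hpa0 f h g (by rw [hf]; ring) hc0 hmh hroot
  set b0 := g.coeff 0 with hb0d
  set b1 := g.coeff 1 with hb1d
  set b2 := g.coeff 2 with hb2d
  set c0 := h.coeff 0 with hc0d
  set c1 := h.coeff 1 with hc1d
  set c2 := h.coeff 2 with hc2d
  have hprodc : b0 * c0 = a0 * (p:ℤ) ^ u := by
    rw [hb0d, hc0d, ← mul_coeff_zero, ← hf, hc0]
  have hrhs : a0 * (p:ℤ) ^ u ≠ 0 := mul_ne_zero ha0 (pow_ne_zero _ hpne)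
  have hb0ne : b0 ≠ 0 := fun h0 => hrhs (by rw [← hprodc, h0, zero_mul])
  have hc0ne : c0 ≠ 0 := fun h0 => hrhs (by rw [← hprodc, h0, mul_zero])
  have hval_pu : padicValInt p ((p:ℤ) ^ u) = u := by
    rw [show ((p:ℤ) ^ u) = ((p ^ u : ℕ) : ℤ) by push_cast; ring]
    rw [padicValInt.of_nat, padicValNat.prime_pow]
  have hkl : padicValInt p b0 + padicValInt p c0 = u := by
    have h1 : padicValInt p (b0 * c0) = padicValInt p b0 + padicValInt p c0 :=
      padicValInt.mul hb0ne hc0ne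
    rw [hprodc, padicValInt.mul ha0 (pow_ne_zero _ hpne),
      padicValInt.eq_zero_of_not_dvd hpa0, hval_pu, zero_add] at h1
    omega
  have hco1 : b0 * c1 + b1 * c0 = 0 := by
    have h1 : (g * h).coeff 1 = b0 * c1 + b1 * c0 := by
      rw [coeff_mul, Finset.Nat.sum_antidiagonal_eq_sum_range_succ_mk]
      simp [Finset.sum_range_succ]
      rfl
    rw [← h1, ← hf, hc1]
  have hco2 : b0 * c2 + b1 * c1 + b2 * c0 = a2 * (p:ℤ) ^ e := by
    have h1 : (g * h).coeff 2 = b0 * c2 + b1 * c1 + b2 * c0 := by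
      rw [coeff_mul, Finset.Nat.sum_antidiagonal_eq_sum_range_succ_mk]
      simp [Finset.sum_range_succ]
      try ring
    rw [← h1, ← hf, hc2]
  have hdvdb0 : (p:ℤ) ^ (e+1) ∣ b0 :=
    (padicValInt_dvd_iff _ _).mpr (Or.inr (by omega))
  have hdvdc0 : (p:ℤ) ^ (e+1) ∣ c0 :=
    (padicValInt_dvd_iff _ _).mpr (Or.inr (by omega))
  have hnd : ¬ (p:ℤ) ^ (e+1) ∣ a2 * (p:ℤ) ^ e := by
    intro hd
    rw [pow_succ, mul_comm a2 ((p:ℤ) ^ e)] at hd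
    exact hpa2 ((mul_dvd_mul_iff_left (pow_ne_zero e hpne)).mp hd)
  have hnd2 : ¬ (p:ℤ) ^ (e+1) ∣ b1 * c1 := by
    intro hd
    apply hnd
    rw [show a2 * (p:ℤ) ^ e = b1 * c1 + (b0 * c2 + b2 * c0) by linarith]
    exact dvd_add hd (dvd_add (hdvdb0.mul_right _) (hdvdc0.mul_left _))
  have hb1c1ne : b1 * c1 ≠ 0 := fun h0 => hnd2 (h0 ▸ dvd_zero _)
  have hb1ne : b1 ≠ 0 := fun h0 => hb1c1ne (by rw [h0, zero_mul])
  have hc1ne : c1 ≠ 0 := fun h0 => hb1c1ne (by rw [h0, mul_zero])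
  have hdvde : (p:ℤ) ^ e ∣ b1 * c1 := by
    rw [show b1 * c1 = a2 * (p:ℤ) ^ e - b0 * c2 - b2 * c0 by linarith]
    have he1 : (p:ℤ) ^ e ∣ (p:ℤ) ^ (e+1) := pow_dvd_pow _ (by omega)
    exact dvd_sub (dvd_sub (Dvd.intro_left _ rfl) ((he1.trans hdvdb0).mul_right _))
      ((he1.trans hdvdc0).mul_left _)
  have hnu : padicValInt p (b1 * c1) = e := by
    have h1 : e ≤ padicValInt p (b1 * c1) := by
      rcases (padicValInt_dvd_iff e (b1 * c1)).mp hdvde with h | h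
      · exact absurd h hb1c1ne
      · exact h
    have h2 : ¬ (e + 1 ≤ padicValInt p (b1 * c1)) := by
      intro h
      exact hnd2 ((padicValInt_dvd_iff _ _).mpr (Or.inr h))
    omega
  have hnu2 : padicValInt p b1 + padicValInt p c1 = e := by
    rw [← padicValInt.mul hb1ne hc1ne, hnu]
  have hrel : padicValInt p b0 + padicValInt p c1 = padicValInt p b1 + padicValInt p c0 := by
    have h1 : b0 * c1 = -(b1 * c0) := by linarith
    have h2 : padicValInt p (b0 * c1) = padicValInt p (b1 * c0) := by
      rw [h1, padicValInt, padicValInt, Int.natAbs_neg]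
    rw [padicValInt.mul hb0ne hc1ne, padicValInt.mul hb1ne hc0ne] at h2
    exact h2
  obtain ⟨k0, hk0⟩ : ∃ x, padicValInt p b0 = x := ⟨_, rfl⟩
  obtain ⟨l0, hl0⟩ : ∃ x, padicValInt p c0 = x := ⟨_, rfl⟩
  obtain ⟨k1, hk1⟩ : ∃ x, padicValInt p b1 = x := ⟨_, rfl⟩
  obtain ⟨l1, hl1⟩ : ∃ x, padicValInt p c1 = x := ⟨_, rfl⟩
  rw [hk0] at hk
  rw [hl0] at hl
  rw [hk0, hl0] at hkl
  rw [hk1, hl1] at hnu2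
  rw [hk0, hl1, hk1, hl0] at hrel
  clear_value b0 b1 b2 c0 c1 c2
  clear * - hue hkl hnu2 hrel
  omega

-- generic Gauss reduction
lemma aux_irred (f : Polynomial ℤ) (hd : 1 ≤ f.natDegree)
    (hcore : ∀ g h : Polynomial ℤ, f = g * h → 1 ≤ g.natDegree → 1 ≤ h.natDegree → False) :
    Irreducible (f.map (Int.castRingHom ℚ)) := by
  have hfne : f ≠ 0 := fun h0 => by rw [h0] at hd; simp at hd
  have hcont : f.content ≠ 0 := fun h0 => hfne (Polynomial.content_eq_zero_iff.mp h0)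
  have hprim := f.isPrimitive_primPart
  have hirr0 : Irreducible f.primPart := by
    constructor
    · intro hun
      have := Polynomial.natDegree_eq_zero_of_isUnit hun
      rw [Polynomial.natDegree_primPart] at this
      omega
    · intro g' h' hgh
      by_contra hcontra
      push_neg at hcontra
      obtain ⟨hg', hh'⟩ := hcontra
      have hdg : 1 ≤ g'.natDegree := by
        by_contra hd2
        push_neg at hd2
        have hz : g'.natDegree = 0 := by omega
        obtain ⟨d, rfl⟩ : ∃ d, g' = C d := ⟨g'.coeff 0, Polynomial.eq_C_of_natDegree_eq_zero hz⟩
        exact hg' (Polynomial.isUnit_C.mpr (hprim d ⟨h', hgh⟩))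
      have hdh : 1 ≤ h'.natDegree := by
        by_contra hd2
        push_neg at hd2
        have hz : h'.natDegree = 0 := by omega
        obtain ⟨d, rfl⟩ : ∃ d, h' = C d := ⟨h'.coeff 0, Polynomial.eq_C_of_natDegree_eq_zero hz⟩
        refine hh' (Polynomial.isUnit_C.mpr (hprim d ⟨g', by rw [hgh, mul_comm]⟩))
      apply hcore (C f.content * g') h' ?_ ?_ hdh
      · conv_lhs => rw [f.eq_C_content_mul_primPart]
        rw [hgh]
        ring
      · rw [Polynomial.natDegree_C_mul hcont]
        exact hdg
  have hirr1 : Irreducible (f.primPart.map (Int.castRingHom ℚ)) :=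
    (Polynomial.IsPrimitive.Int.irreducible_iff_irreducible_map_cast hprim).mp hirr0
  have hassoc : Associated (f.primPart.map (Int.castRingHom ℚ)) (f.map (Int.castRingHom ℚ)) := by
    have hCunit : IsUnit (C ((f.content : ℚ))) :=
      Polynomial.isUnit_C.mpr (isUnit_iff_ne_zero.mpr (by exact_mod_cast hcont))
    refine ⟨hCunit.unit, ?_⟩
    rw [IsUnit.unit_spec]
    conv_rhs => rw [f.eq_C_content_mul_primPart]
    rw [Polynomial.map_mul, Polynomial.map_C]
    rw [mul_comm]
    norm_cast
  exact hassoc.irreducible hirr1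


theorem stmt_10 (p n u e : ℕ) (a : ℕ → ℤ) (hp : p.Prime) (hu : 1 ≤ u) (hn : 3 ≤ n)
    (han : a n ≠ 0) (hue : u % 2 ≠ e % 2) (hpa : ¬ (p : ℤ) ∣ a 0 * a 2)
    (hsum : (p : ℤ) ^ u >
      |a 0 * a 2| * (p : ℤ) ^ (3 * e) +
        ∑ i ∈ Finset.Icc 3 n, |a 0 ^ (i - 1) * a i| * (p : ℤ) ^ (i * e)) :
    Irreducible ((∑ i ∈ Finset.Icc 3 n, C (a i) * X ^ i +
        C (a 2 * (p : ℤ) ^ e) * X ^ 2 + C (a 0 * (p : ℤ) ^ u)).map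
      (Int.castRingHom ℚ)) := by
  set f : Polynomial ℤ := (∑ i ∈ Finset.Icc 3 n, C (a i) * X ^ i) +
        C (a 2 * (p : ℤ) ^ e) * X ^ 2 + C (a 0 * (p : ℤ) ^ u) with hfdef
  have hpa0 : ¬ (p:ℤ) ∣ a 0 := fun hd => hpa (hd.mul_right _)
  have hpa2 : ¬ (p:ℤ) ∣ a 2 := fun hd => hpa (hd.mul_left _)
  have ha0 : a 0 ≠ 0 := fun h0 => hpa0 (h0 ▸ dvd_zero _)
  have hppos : (0:ℝ) < (p:ℝ) := by exact_mod_cast hp.pos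
  have hcoeff : ∀ j, f.coeff j = ((if j ∈ Finset.Icc 3 n then a j else 0) +
      (if j = 2 then a 2 * (p:ℤ) ^ e else 0)) + (if j = 0 then a 0 * (p:ℤ) ^ u else 0) := by
    intro j
    rw [hfdef, coeff_add, coeff_add, finset_sum_coeff]
    congr 1
    congr 1
    · rw [Finset.sum_congr rfl (fun i _ => by rw [coeff_C_mul, coeff_X_pow, mul_ite, mul_one, mul_zero])]
      rw [Finset.sum_ite_eq (Finset.Icc 3 n) j a]
    · rw [coeff_C_mul, coeff_X_pow, mul_ite, mul_one, mul_zero]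
    · rw [coeff_C]
  have hc0 : f.coeff 0 = a 0 * (p:ℤ) ^ u := by
    rw [hcoeff]; simp [Finset.mem_Icc]
  have hc1 : f.coeff 1 = 0 := by
    rw [hcoeff]; simp [Finset.mem_Icc]
  have hc2 : f.coeff 2 = a 2 * (p:ℤ) ^ e := by
    rw [hcoeff]; simp [Finset.mem_Icc]
  have hcn : f.coeff n = a n := by
    rw [hcoeff]
    have h1 : n ∈ Finset.Icc 3 n := by simp [hn]
    have h2 : n ≠ 2 := by omega
    have h3 : n ≠ 0 := by omega
    simp [h1, h2, h3]
  have hdeg : f.natDegree = n := by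
    apply le_antisymm
    · rw [natDegree_le_iff_coeff_eq_zero]
      intro N hN
      rw [hcoeff]
      have h1 : N ∉ Finset.Icc 3 n := by simp [Finset.mem_Icc]; omega
      have h2 : N ≠ 2 := by omega
      have h3 : N ≠ 0 := by omega
      simp [h1, h2, h3]
    · exact le_natDegree_of_ne_zero (by rw [hcn]; exact han)
  have hroot : ∀ θ : ℂ, (f.map (Int.castRingHom ℂ)).eval θ = 0 →
      (((|a 0| * (p:ℤ) ^ e : ℤ)) : ℝ) < Complex.abs θ := by
    have ha0r : (1:ℝ) ≤ |(a 0 : ℝ)| := by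
      have := Int.one_le_abs ha0
      calc (1:ℝ) ≤ ((|a 0| : ℤ) : ℝ) := by exact_mod_cast this
        _ = |(a 0 : ℝ)| := by push_cast [Int.cast_abs]; ring
    intro θ hθ
    by_contra hcon
    push_neg at hcon
    have heval : (a 0 : ℂ) * (p:ℂ) ^ u
        = -((a 2 : ℂ) * (p:ℂ) ^ e * θ ^ 2 + ∑ i ∈ Finset.Icc 3 n, (a i : ℂ) * θ ^ i) := by
      rw [hfdef] at hθ
      simp only [Polynomial.map_add, Polynomial.map_sum, Polynomial.map_mul, Polynomial.map_pow,
        Polynomial.map_C, Polynomial.map_X, eval_add, eval_finset_sum, eval_mul, eval_pow,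
        eval_C, eval_X, Int.coe_castRingHom] at hθ
      push_cast at hθ
      linear_combination hθ
    set r := Complex.abs θ with hr
    have hTcast : (((|a 0| * (p:ℤ) ^ e : ℤ)) : ℝ) = |(a 0 : ℝ)| * (p:ℝ) ^ e := by
      push_cast [Int.cast_abs]; ring
    rw [hTcast] at hcon
    have hrn : 0 ≤ r := AbsoluteValue.nonneg _ _
    have h1 : |(a 0 : ℝ)| * (p:ℝ) ^ u
        ≤ |(a 2 : ℝ)| * (p:ℝ) ^ e * r ^ 2 + ∑ i ∈ Finset.Icc 3 n, |(a i : ℝ)| * r ^ i := by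
      have h2 := congrArg Complex.abs heval
      rw [AbsoluteValue.map_neg] at h2
      rw [map_mul, map_pow, Complex.abs_intCast, Complex.abs_natCast] at h2
      rw [h2]
      calc Complex.abs ((a 2 : ℂ) * (p:ℂ) ^ e * θ ^ 2 + ∑ i ∈ Finset.Icc 3 n, (a i : ℂ) * θ ^ i)
          ≤ Complex.abs ((a 2 : ℂ) * (p:ℂ) ^ e * θ ^ 2)
            + Complex.abs (∑ i ∈ Finset.Icc 3 n, (a i : ℂ) * θ ^ i) :=
            AbsoluteValue.add_le _ _ _
        _ ≤ |(a 2 : ℝ)| * (p:ℝ) ^ e * r ^ 2 + ∑ i ∈ Finset.Icc 3 n, |(a i : ℝ)| * r ^ i := by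
            apply add_le_add
            · rw [map_mul, map_mul, map_pow, map_pow, Complex.abs_intCast, Complex.abs_natCast]
            · calc Complex.abs (∑ i ∈ Finset.Icc 3 n, (a i : ℂ) * θ ^ i)
                  ≤ ∑ i ∈ Finset.Icc 3 n, Complex.abs ((a i : ℂ) * θ ^ i) :=
                  AbsoluteValue.sum_le _ _ _
                _ = ∑ i ∈ Finset.Icc 3 n, |(a i : ℝ)| * r ^ i := by
                    apply Finset.sum_congr rfl
                    intro i _
                    rw [map_mul, map_pow, Complex.abs_intCast]
    set T : ℝ := |(a 0 : ℝ)| * (p:ℝ) ^ e with hT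
    have hTnn : 0 ≤ T := by positivity
    have h3 : |(a 2 : ℝ)| * (p:ℝ) ^ e * r ^ 2 + ∑ i ∈ Finset.Icc 3 n, |(a i : ℝ)| * r ^ i
        ≤ |(a 2 : ℝ)| * (p:ℝ) ^ e * T ^ 2 + ∑ i ∈ Finset.Icc 3 n, |(a i : ℝ)| * T ^ i := by
      apply add_le_add
      · apply mul_le_mul_of_nonneg_left (pow_le_pow_left₀ hrn hcon 2) (by positivity)
      · apply Finset.sum_le_sum
        intro i _
        exact mul_le_mul_of_nonneg_left (pow_le_pow_left₀ hrn hcon i) (abs_nonneg _)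
    have h4 : |(a 2 : ℝ)| * (p:ℝ) ^ e * T ^ 2 + ∑ i ∈ Finset.Icc 3 n, |(a i : ℝ)| * T ^ i
        = |(a 0 : ℝ)| * (|(a 0 : ℝ) * (a 2 : ℝ)| * (p:ℝ) ^ (3*e)
          + ∑ i ∈ Finset.Icc 3 n, |(a 0 : ℝ) ^ (i-1) * (a i : ℝ)| * (p:ℝ) ^ (i*e)) := by
      rw [mul_add, Finset.mul_sum]
      congr 1
      · rw [hT, abs_mul, show (p:ℝ)^(3*e) = ((p:ℝ)^e)^3 by rw [← pow_mul, mul_comm]]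
        ring
      · apply Finset.sum_congr rfl
        intro i hi
        have hi3 : 3 ≤ i := (Finset.mem_Icc.mp hi).1
        rw [hT, abs_mul, abs_pow, mul_pow, ← pow_mul, mul_comm e i]
        have : |(a 0 : ℝ)| ^ i = |(a 0 : ℝ)| * |(a 0 : ℝ)| ^ (i - 1) := by
          rw [← pow_succ']
          congr 1
          omega
        rw [this]
        ring
    have h5 : |(a 0 : ℝ)| * (|(a 0 : ℝ) * (a 2 : ℝ)| * (p:ℝ) ^ (3*e)
          + ∑ i ∈ Finset.Icc 3 n, |(a 0 : ℝ) ^ (i-1) * (a i : ℝ)| * (p:ℝ) ^ (i*e))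
        < |(a 0 : ℝ)| * (p:ℝ) ^ u := by
      apply mul_lt_mul_of_pos_left _ (by linarith)
      have hsumr : ((((|a 0 * a 2| * (p : ℤ) ^ (3 * e) +
        ∑ i ∈ Finset.Icc 3 n, |a 0 ^ (i - 1) * a i| * (p : ℤ) ^ (i * e))) : ℤ) : ℝ) < ((p:ℝ)) ^ u := by
        exact_mod_cast hsum
      calc |(a 0 : ℝ) * (a 2 : ℝ)| * (p:ℝ) ^ (3*e)
          + ∑ i ∈ Finset.Icc 3 n, |(a 0 : ℝ) ^ (i-1) * (a i : ℝ)| * (p:ℝ) ^ (i*e)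
          = ((((|a 0 * a 2| * (p : ℤ) ^ (3 * e) +
            ∑ i ∈ Finset.Icc 3 n, |a 0 ^ (i - 1) * a i| * (p : ℤ) ^ (i * e))) : ℤ) : ℝ) := by
            push_cast [Int.cast_abs]
            ring
        _ < (p:ℝ) ^ u := hsumr
    linarith
  exact aux_irred f (by rw [hdeg]; omega)
    (aux_core p u e hp (a 0) (a 2) hue hpa0 hpa2 f hc0 hc1 hc2 hroot)
end

section
/- Under the hypotheses of the main theorem — f(x) = a_n x^n + ... + a_m x^m + p^u ∈ ℤ[x] with p prime, u ≥ 1, p ∤ a_m, gcd(u, m) = 1 — if f factors in ℤ[x] as f = f_1 · f_2 with both f_1 and f_2 of degree at least 1, then one of the two factors has constant term of absolute value 1; that is, |f_1(0)| = 1 or |f_2(0)| = 1. -/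
open Polynomial Finset

private lemma aux_dvd_iff (p : ℕ) [Fact p.Prime] (k : ℕ) {x : ℤ} (hx : x ≠ 0) :
    (p : ℤ) ^ k ∣ x ↔ k ≤ padicValInt p x := by
  rw [padicValInt_dvd_iff]; simp [hx]

private lemma nat_aux (m u c₁ c₂ k₁ k₂ v w i j W₁ W₂ : ℕ) (hm : 1 ≤ m)
    (hW₁ : m * c₁ + u * k₁ = W₁) (hW₂ : m * c₂ + u * k₂ = W₂) (hij : i + j = k₁ + k₂)
    (h : W₁ + W₂ + 1 ≤ m * v + u * i + (m * w + u * j)) : c₁ + c₂ + 1 ≤ v + w := by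
  have h2 : m * (c₁ + c₂) < m * (v + w) := by
    have e1 : m * (c₁ + c₂) = m * c₁ + m * c₂ := Nat.mul_add _ _ _
    have e2 : m * (v + w) = m * v + m * w := Nat.mul_add _ _ _
    have e3 : u * (i + j) = u * i + u * j := Nat.mul_add _ _ _
    have e4 : u * (k₁ + k₂) = u * k₁ + u * k₂ := Nat.mul_add _ _ _
    have e5 : u * (i + j) = u * (k₁ + k₂) := by rw [hij]
    omega
  exact Nat.lt_of_mul_lt_mul_left h2

private lemma get_min (p m u α : ℕ) [Fact p.Prime] (g : Polynomial ℤ)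
    (h0 : g.coeff 0 ≠ 0) (hv0 : padicValInt p (g.coeff 0) = α) :
    ∃ W k c, g.coeff k ≠ 0 ∧ padicValInt p (g.coeff k) = c ∧ m * c + u * k = W ∧
      W ≤ m * α ∧ k ≤ g.natDegree ∧
      (∀ j, g.coeff j ≠ 0 → W ≤ m * padicValInt p (g.coeff j) + u * j) ∧
      (∀ j, k < j → g.coeff j ≠ 0 → W < m * padicValInt p (g.coeff j) + u * j) := by
  classical
  set wf : ℕ → ℕ := fun j =>
    if g.coeff j = 0 then m * α + 1 else m * padicValInt p (g.coeff j) + u * j with hwf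
  set s : Finset ℕ := Finset.range (g.natDegree + 1) with hs
  have h0s : 0 ∈ s := by simp [hs]
  obtain ⟨j₀, hj₀s, hmin⟩ := s.exists_min_image wf ⟨0, h0s⟩
  set W := wf j₀ with hW
  have hwf0 : wf 0 = m * α := by simp [hwf, h0, hv0]
  have hWle : W ≤ m * α := by rw [← hwf0]; exact hmin 0 h0s
  set A : Finset ℕ := s.filter (fun j => wf j = W) with hA
  have hAne : A.Nonempty := ⟨j₀, by simp [hA, hj₀s]; rfl⟩
  set k := A.max' hAne with hk
  have hkA : k ∈ A := A.max'_mem hAne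
  have hkW : wf k = W := (Finset.mem_filter.mp hkA).2
  have hks : k ∈ s := (Finset.mem_filter.mp hkA).1
  have hkd : k ≤ g.natDegree := by
    have := Finset.mem_range.mp (hs ▸ hks)
    omega
  have hknz : g.coeff k ≠ 0 := by
    intro h
    rw [hwf] at hkW; simp only [h, if_pos] at hkW
    omega
  refine ⟨W, k, padicValInt p (g.coeff k), hknz, rfl, ?_, hWle, hkd, ?_, ?_⟩
  · rw [← hkW, hwf]; simp [hknz]
  · intro j hj
    have hjs : j ∈ s := by
      simp [hs, Nat.lt_succ_iff]
      exact le_natDegree_of_ne_zero hj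
    have := hmin j hjs
    rw [hwf] at this; simp only [hj, if_neg, ite_false] at this
    exact this
  · intro j hkj hj
    have hjs : j ∈ s := by
      simp [hs, Nat.lt_succ_iff]
      exact le_natDegree_of_ne_zero hj
    have hle : W ≤ m * padicValInt p (g.coeff j) + u * j := by
      have := hmin j hjs
      rw [hwf] at this; simp only [hj, ite_false] at this
      exact this
    rcases lt_or_eq_of_le hle with h | h
    · exact h
    · exfalso
      have hjA : j ∈ A := by
        simp [hA, hjs]
        rw [hwf]; simp [hj, ← h]
      have := A.le_max' j hjA
      omega

private lemma key_exact (p m u : ℕ) [Fact p.Prime] (hm : 1 ≤ m)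
    (g₁ g₂ : Polynomial ℤ) (k₁ k₂ c₁ c₂ W₁ W₂ : ℕ)
    (e₁ : g₁.coeff k₁ ≠ 0) (v₁ : padicValInt p (g₁.coeff k₁) = c₁)
    (hW₁ : m * c₁ + u * k₁ = W₁)
    (e₂ : g₂.coeff k₂ ≠ 0) (v₂ : padicValInt p (g₂.coeff k₂) = c₂)
    (hW₂ : m * c₂ + u * k₂ = W₂)
    (lb₁ : ∀ j, g₁.coeff j ≠ 0 → W₁ ≤ m * padicValInt p (g₁.coeff j) + u * j)
    (st₁ : ∀ j, k₁ < j → g₁.coeff j ≠ 0 → W₁ < m * padicValInt p (g₁.coeff j) + u * j)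
    (lb₂ : ∀ j, g₂.coeff j ≠ 0 → W₂ ≤ m * padicValInt p (g₂.coeff j) + u * j)
    (st₂ : ∀ j, k₂ < j → g₂.coeff j ≠ 0 → W₂ < m * padicValInt p (g₂.coeff j) + u * j) :
    (g₁ * g₂).coeff (k₁ + k₂) ≠ 0 ∧
      m * padicValInt p ((g₁ * g₂).coeff (k₁ + k₂)) + u * (k₁ + k₂) = W₁ + W₂ := by
  classical
  have hmem : (k₁, k₂) ∈ antidiagonal (k₁ + k₂) := by simp
  have hsplit : (g₁ * g₂).coeff (k₁ + k₂) =
      g₁.coeff k₁ * g₂.coeff k₂ +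
        ∑ x ∈ (antidiagonal (k₁ + k₂)).erase (k₁, k₂), g₁.coeff x.1 * g₂.coeff x.2 := by
    rw [coeff_mul, ← Finset.add_sum_erase _ _ hmem]
  have htne : g₁.coeff k₁ * g₂.coeff k₂ ≠ 0 := mul_ne_zero e₁ e₂
  have hvterm : padicValInt p (g₁.coeff k₁ * g₂.coeff k₂) = c₁ + c₂ := by
    rw [padicValInt.mul e₁ e₂, v₁, v₂]
  have hrest : (p : ℤ) ^ (c₁ + c₂ + 1) ∣
      ∑ x ∈ (antidiagonal (k₁ + k₂)).erase (k₁, k₂), g₁.coeff x.1 * g₂.coeff x.2 := by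
    apply Finset.dvd_sum
    intro x hx
    obtain ⟨hxne, hxmem⟩ := Finset.mem_erase.mp hx
    have hxsum : x.1 + x.2 = k₁ + k₂ := Finset.HasAntidiagonal.mem_antidiagonal.mp hxmem
    by_cases h1 : g₁.coeff x.1 = 0
    · simp [h1]
    by_cases h2 : g₂.coeff x.2 = 0
    · simp [h2]
    have hne : g₁.coeff x.1 * g₂.coeff x.2 ≠ 0 := mul_ne_zero h1 h2
    rw [aux_dvd_iff p _ hne, padicValInt.mul h1 h2]
    have key : W₁ + W₂ + 1 ≤ m * padicValInt p (g₁.coeff x.1) + u * x.1 +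
        (m * padicValInt p (g₂.coeff x.2) + u * x.2) := by
      rcases lt_trichotomy x.1 k₁ with h | h | h
      · have hst := st₂ x.2 (by omega) h2
        have hlb := lb₁ x.1 h1
        omega
      · exfalso; apply hxne
        have : x.2 = k₂ := by omega
        exact Prod.ext h this
      · have hst := st₁ x.1 h h1
        have hlb := lb₂ x.2 h2
        omega
    exact nat_aux m u c₁ c₂ k₁ k₂ _ _ x.1 x.2 W₁ W₂ hm hW₁ hW₂ hxsum key
  have hdvd_c : (p : ℤ) ^ (c₁ + c₂) ∣ g₁.coeff k₁ * g₂.coeff k₂ := by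
    rw [aux_dvd_iff p _ htne, hvterm]
  have hndvd : ¬ (p : ℤ) ^ (c₁ + c₂ + 1) ∣ g₁.coeff k₁ * g₂.coeff k₂ := by
    rw [aux_dvd_iff p _ htne, hvterm]; omega
  have hndvdS : ¬ (p : ℤ) ^ (c₁ + c₂ + 1) ∣ (g₁ * g₂).coeff (k₁ + k₂) := by
    intro h
    apply hndvd
    have heq : g₁.coeff k₁ * g₂.coeff k₂ = (g₁ * g₂).coeff (k₁ + k₂) -
        ∑ x ∈ (antidiagonal (k₁ + k₂)).erase (k₁, k₂), g₁.coeff x.1 * g₂.coeff x.2 := by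
      rw [hsplit]; ring
    rw [heq]
    exact dvd_sub h hrest
  have hSne : (g₁ * g₂).coeff (k₁ + k₂) ≠ 0 := by
    intro h; apply hndvdS; rw [h]; exact dvd_zero _
  have hval : padicValInt p ((g₁ * g₂).coeff (k₁ + k₂)) = c₁ + c₂ := by
    have hge : c₁ + c₂ ≤ padicValInt p ((g₁ * g₂).coeff (k₁ + k₂)) := by
      rw [← aux_dvd_iff p _ hSne, hsplit]
      exact dvd_add hdvd_c (dvd_trans (pow_dvd_pow _ (by omega)) hrest)
    have hlt : padicValInt p ((g₁ * g₂).coeff (k₁ + k₂)) < c₁ + c₂ + 1 := by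
      by_contra h
      exact hndvdS ((aux_dvd_iff p _ hSne).mpr (by omega))
    omega
  refine ⟨hSne, ?_⟩
  rw [hval, ← hW₁, ← hW₂]; ring

theorem stmt_11 (p n m u : ℕ) (a : ℕ → ℤ) (hp : p.Prime) (hu : 1 ≤ u)
    (hm : 1 ≤ m) (hmn : m ≤ n)
    (hpam : ¬ (p : ℤ) ∣ a m) (hgcd : Nat.gcd u m = 1)
    (f₁ f₂ : Polynomial ℤ)
    (hfac : ∑ i ∈ Finset.Icc m n, C (a i) * X ^ i + C ((p : ℤ) ^ u) = f₁ * f₂)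
    (hd₁ : 1 ≤ f₁.natDegree) (hd₂ : 1 ≤ f₂.natDegree) :
    |f₁.eval 0| = 1 ∨ |f₂.eval 0| = 1 := by
  classical
  haveI : Fact p.Prime := ⟨hp⟩
  have hcoeff : ∀ j, (f₁ * f₂).coeff j =
      (if j ∈ Finset.Icc m n then a j else 0) + (if j = 0 then (p : ℤ) ^ u else 0) := by
    intro j
    rw [← hfac, coeff_add, finset_sum_coeff]
    congr 1
    · simp only [coeff_C_mul, coeff_X_pow, mul_ite, mul_one, mul_zero]
      exact Finset.sum_ite_eq (Finset.Icc m n) j a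
    · exact coeff_C
  have hc0 : (f₁ * f₂).coeff 0 = (p : ℤ) ^ u := by
    rw [hcoeff 0]
    simp [Finset.mem_Icc]
    omega
  have hcm : (f₁ * f₂).coeff m = a m := by
    rw [hcoeff m]
    simp [Finset.mem_Icc, hmn]
    omega
  have hprod : f₁.coeff 0 * f₂.coeff 0 = (p : ℤ) ^ u := by
    rw [← mul_coeff_zero]; exact hc0
  have hpu_ne : ((p : ℤ) ^ u) ≠ 0 := by
    have := hp.pos
    positivity
  have h1ne : f₁.coeff 0 ≠ 0 := by
    intro h; rw [h, zero_mul] at hprod; exact hpu_ne hprod.symm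
  have h2ne : f₂.coeff 0 ≠ 0 := by
    intro h; rw [h, mul_zero] at hprod; exact hpu_ne hprod.symm
  have hAB : (f₁.coeff 0).natAbs * (f₂.coeff 0).natAbs = p ^ u := by
    have := congrArg Int.natAbs hprod
    rwa [Int.natAbs_mul, Int.natAbs_pow, Int.natAbs_natCast] at this
  obtain ⟨α, hαu, hA⟩ := (Nat.dvd_prime_pow hp).mp (⟨_, hAB.symm⟩ : (f₁.coeff 0).natAbs ∣ p ^ u)
  obtain ⟨β, hβu, hB⟩ := (Nat.dvd_prime_pow hp).mp
    (⟨_, by rw [mul_comm] at hAB; exact hAB.symm⟩ : (f₂.coeff 0).natAbs ∣ p ^ u)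
  have hαβ : α + β = u := by
    have h1 : p ^ α * p ^ β = p ^ u := by rw [← hA, ← hB]; exact hAB
    rw [← pow_add] at h1
    exact Nat.pow_right_injective hp.two_le h1
  by_cases hα0 : α = 0
  · left
    rw [← coeff_zero_eq_eval_zero, Int.abs_eq_natAbs, hA, hα0, pow_zero]
    rfl
  by_cases hβ0 : β = 0
  · right
    rw [← coeff_zero_eq_eval_zero, Int.abs_eq_natAbs, hB, hβ0, pow_zero]
    rfl
  exfalso
  have hα1 : 1 ≤ α := by omega
  have hβ1 : 1 ≤ β := by omega
  have hv₁0 : padicValInt p (f₁.coeff 0) = α := by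
    simp [padicValInt, hA, padicValNat.prime_pow]
  have hv₂0 : padicValInt p (f₂.coeff 0) = β := by
    simp [padicValInt, hB, padicValNat.prime_pow]
  obtain ⟨W₁, k₁, c₁, e₁, v₁, hWk₁, hW₁le, hk₁d, lb₁, st₁⟩ := get_min p m u α f₁ h1ne hv₁0
  obtain ⟨W₂, k₂, c₂, e₂, v₂, hWk₂, hW₂le, hk₂d, lb₂, st₂⟩ := get_min p m u β f₂ h2ne hv₂0
  obtain ⟨hKne, hKval⟩ := key_exact p m u hm f₁ f₂ k₁ k₂ c₁ c₂ W₁ W₂ e₁ v₁ hWk₁ e₂ v₂ hWk₂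
    lb₁ st₁ lb₂ st₂
  have hmm : m * α + m * β = m * u := by rw [← Nat.mul_add, hαβ]
  have hcomm : u * m = m * u := Nat.mul_comm u m
  by_cases hK0 : k₁ + k₂ = 0
  · -- Case A : both largest achievers at 0; show p ∣ a m
    have hk₁0 : k₁ = 0 := by omega
    have hk₂0 : k₂ = 0 := by omega
    have hvpu : padicValInt p ((p : ℤ) ^ u) = u := by
      simp [padicValInt, Int.natAbs_pow, padicValNat.prime_pow]
    rw [hK0, hc0, hvpu] at hKval
    -- hKval : m * u + u * 0 = W₁ + W₂
    have hWsum : W₁ + W₂ = m * u := by omega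
    have hW₁eq : W₁ = m * α := by omega
    have hW₂eq : W₂ = m * β := by omega
    apply hpam
    rw [← hcm, coeff_mul]
    apply Finset.dvd_sum
    intro x hx
    have hxs : x.1 + x.2 = m := Finset.HasAntidiagonal.mem_antidiagonal.mp hx
    by_cases hz1 : f₁.coeff x.1 = 0
    · simp [hz1]
    by_cases hz2 : f₂.coeff x.2 = 0
    · simp [hz2]
    by_cases hx1 : x.1 = 0
    · have hdvd : (p : ℤ) ∣ f₁.coeff 0 := by
        have := (aux_dvd_iff p 1 h1ne).mpr (by rw [hv₁0]; omega)
        simpa using this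
      exact Dvd.dvd.mul_right (by rw [hx1]; exact hdvd) _
    · have hst := st₁ x.1 (by omega) hz1
      have hlb := lb₂ x.2 hz2
      have hge1 : 1 ≤ padicValInt p (f₁.coeff x.1) + padicValInt p (f₂.coeff x.2) := by
        rcases Nat.eq_zero_or_pos
          (padicValInt p (f₁.coeff x.1) + padicValInt p (f₂.coeff x.2)) with h | h
        · exfalso
          have hv0' : padicValInt p (f₁.coeff x.1) = 0 := by omega
          have hw0' : padicValInt p (f₂.coeff x.2) = 0 := by omega
          rw [hv0', Nat.mul_zero, Nat.zero_add] at hst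
          rw [hw0', Nat.mul_zero, Nat.zero_add] at hlb
          have e1 : u * x.1 + u * x.2 = u * m := by rw [← Nat.mul_add, hxs]
          omega
        · exact h
      have hne12 : f₁.coeff x.1 * f₂.coeff x.2 ≠ 0 := mul_ne_zero hz1 hz2
      have := (aux_dvd_iff p 1 hne12).mpr (by rw [padicValInt.mul hz1 hz2]; omega)
      simpa using this
  · -- Case B : K = k₁ + k₂ ≥ 1 hence K = m
    have hKIcc : k₁ + k₂ ∈ Finset.Icc m n := by
      by_contra h
      apply hKne
      rw [hcoeff]
      simp [h, hK0]
      intro h1 h2; exact absurd (by omega : k₁ + k₂ = 0) hK0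
    have hmK : m ≤ k₁ + k₂ := (Finset.mem_Icc.mp hKIcc).1
    have hWle : W₁ + W₂ ≤ m * u := by omega
    have huK : u * m ≤ u * (k₁ + k₂) := Nat.mul_le_mul_left u hmK
    have hKm : k₁ + k₂ = m := by
      by_contra h
      have h1 : m < k₁ + k₂ := by omega
      have h2 : u * m < u * (k₁ + k₂) := mul_lt_mul_of_pos_left h1 (by omega)
      omega
    have hWsum : W₁ + W₂ = m * u := by
      rw [hKm] at hKval
      omega
    have hW₁eq : W₁ = m * α := by omega
    have hW₂eq : W₂ = m * β := by omega
    -- m ∣ k₁ and m ∣ k₂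
    have hdvd₁ : m ∣ k₁ := by
      have hc₁α : c₁ ≤ α := by
        have h' : m * c₁ ≤ m * α := by omega
        exact Nat.le_of_mul_le_mul_left h' (by omega)
      have hZ : (m : ℤ) ∣ (u : ℤ) * k₁ := by
        refine ⟨(α : ℤ) - c₁, ?_⟩
        have hcast : (m : ℤ) * c₁ + u * k₁ = m * α := by exact_mod_cast hW₁eq ▸ hWk₁
        ring_nf
        linarith
      have : (m : ℕ) ∣ u * k₁ := by exact_mod_cast hZ
      exact (Nat.Coprime.dvd_of_dvd_mul_left (Nat.coprime_comm.mp hgcd) this)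
    have hdvd₂ : m ∣ k₂ := by
      have hc₂β : c₂ ≤ β := by
        have h' : m * c₂ ≤ m * β := by omega
        exact Nat.le_of_mul_le_mul_left h' (by omega)
      have hZ : (m : ℤ) ∣ (u : ℤ) * k₂ := by
        refine ⟨(β : ℤ) - c₂, ?_⟩
        have hcast : (m : ℤ) * c₂ + u * k₂ = m * β := by exact_mod_cast hW₂eq ▸ hWk₂
        ring_nf
        linarith
      have : (m : ℕ) ∣ u * k₂ := by exact_mod_cast hZ
      exact (Nat.Coprime.dvd_of_dvd_mul_left (Nat.coprime_comm.mp hgcd) this)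
    rcases Nat.lt_or_ge k₁ m with h | h
    · -- k₁ = 0, k₂ = m
      have hk₁0 : k₁ = 0 := Nat.eq_zero_of_dvd_of_lt hdvd₁ h
      have hk₂m : k₂ = m := by omega
      -- m * c₂ + u * m = m * β  ⇒  β ≥ u, contradiction with α ≥ 1
      rw [hk₂m] at hWk₂
      have : m * u ≤ m * β := by omega
      have hβu' : u ≤ β := Nat.le_of_mul_le_mul_left this (by omega)
      omega
    · -- k₁ = m, k₂ = 0
      have hk₁m : k₁ = m := by omega
      rw [hk₁m] at hWk₁
      have : m * u ≤ m * α := by omega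
      have hαu' : u ≤ α := Nat.le_of_mul_le_mul_left this (by omega)
      omega
end
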